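/- arXiv:1508.07185 — 10 statements merged into one kernel-verified Lean document; each statement's English description precedes it below -/
import Mathlib

section
/- Let c ∈ ℕ with c ≥ 2 and let n ∈ ℕ₀. Then, as an identity of complex numbers, Σ_{ξ ∈ μ_c, ξ ≠ 1} ℬ_n(ξ) = (1 − c^{n+1})·B_{n+1}/(n+1). -/
/-!
Summing geometric series over all `c`-th roots of unity gives
`∑_{ξ^c = 1} 1/(1 - ξx) = c/(1 - x^c)`, so the terms with `ξ ≠ 1` add up to
`c/(1 - x^c) - 1/(1 - x)`. At `x = eᵗ`, where `t/(eᵗ - 1) = ∑ Bₙ tⁿ/n!`, this is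
`(B(t) - B(ct))/t`, and comparing coefficients of `tⁿ` gives the identity.
-/

/-- The twisted Bernoulli numbers `ℬ_n(ξ)`, defined by
`1/(1 - ξ·exp t) = Σ_{n≥0} ℬ_n(ξ) tⁿ/n!` in `ℂ[[t]]`. -/
noncomputable def twistedBernoulli (ξ : ℂ) (n : ℕ) : ℂ :=
  (Nat.factorial n : ℂ) *
    PowerSeries.coeff n (1 - PowerSeries.C ξ * PowerSeries.exp ℂ)⁻¹

open PowerSeries Finset
open Polynomial (nthRootsFinset)

namespace IsPrimitiveRoot

variable {K : Type*} [CommRing K] [IsDomain K] {ζ : K} {c : ℕ}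

lemma nthRootsFinset_one_eq_image_pow [NeZero c] [DecidableEq K] (hζ : IsPrimitiveRoot ζ c) :
    nthRootsFinset c (1 : K) = (range c).image (ζ ^ ·) := by
  ext ξ
  simp only [Polynomial.mem_nthRootsFinset (NeZero.pos c), mem_image, mem_range]
  refine ⟨hζ.eq_pow_of_pow_eq_one, ?_⟩
  rintro ⟨i, -, rfl⟩
  rw [pow_right_comm, hζ.pow_eq_one, one_pow]

lemma sum_nthRootsFinset_pow (hζ : IsPrimitiveRoot ζ c) (j : ℕ) :
    ∑ ξ ∈ nthRootsFinset c (1 : K), ξ ^ j = if c ∣ j then (c : K) else 0 := by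
  classical
  rcases c.eq_zero_or_pos with rfl | hc
  · simp
  have : NeZero c := ⟨hc.ne'⟩
  rw [hζ.nthRootsFinset_one_eq_image_pow,
    sum_image fun i hi k hk => hζ.pow_inj (mem_range.mp hi) (mem_range.mp hk)]
  simp_rw [pow_right_comm ζ _ j]
  split_ifs with hdvd
  · simp [(hζ.pow_eq_one_iff_dvd j).mpr hdvd]
  · have hne : ζ ^ j - 1 ≠ 0 := sub_ne_zero.mpr fun h => hdvd ((hζ.pow_eq_one_iff_dvd j).mp h)
    apply mul_left_injective₀ hne
    dsimp only
    rw [zero_mul, geom_sum_mul, pow_right_comm, hζ.pow_eq_one, one_pow, sub_self]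

lemma sum_nthRootsFinset_geom_sum {A : Type*} [CommRing A] [Algebra K A]
    (hζ : IsPrimitiveRoot ζ c) (x : A) :
    ∑ ξ ∈ nthRootsFinset c (1 : K), ∑ j ∈ range c, (algebraMap K A ξ * x) ^ j = c := by
  simp_rw [mul_pow, ← map_pow]
  rw [sum_comm]
  simp_rw [← sum_mul, ← map_sum, hζ.sum_nthRootsFinset_pow]
  rcases c.eq_zero_or_pos with rfl | hc
  · simp
  rw [sum_eq_single_of_mem 0 (mem_range.mpr hc)]
  · simp
  · intro j hj hj0
    rw [if_neg (fun h => hj0 (Nat.eq_zero_of_dvd_of_lt h (mem_range.mp hj))), map_zero, zero_mul]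

end IsPrimitiveRoot

namespace PowerSeries

section Bernoulli

variable {A : Type*} [CommRing A] [Algebra ℚ A]

lemma rescale_bernoulliPowerSeries_mul_exp_pow_sub_one (k : ℕ) :
    rescale (k : A) (bernoulliPowerSeries A) * (exp A ^ k - 1) = C (k : A) * X := by
  rw [exp_pow_eq_rescale_exp, ← map_one (rescale (k : A)), ← map_sub, ← map_mul,
    bernoulliPowerSeries_mul_exp_sub_one, rescale_X]

lemma coeff_bernoulliPowerSeries_sub_rescale (a : A) (n : ℕ) :
    coeff n (bernoulliPowerSeries A - rescale a (bernoulliPowerSeries A))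
      = (1 - a ^ n) * algebraMap ℚ A (bernoulli n / n.factorial) := by
  rw [map_sub, coeff_rescale, bernoulliPowerSeries, coeff_mk]
  ring

lemma one_sub_exp_pow_ne_zero [CharZero A] {c : ℕ} (hc : c ≠ 0) : (1 - exp A ^ c) ≠ 0 := by
  intro h
  have h1 := congrArg (coeff 1) h
  rw [map_sub, exp_pow_eq_rescale_exp, coeff_rescale, coeff_exp] at h1
  simp [hc] at h1

end Bernoulli

variable {K : Type*} [Field K]

lemma inv_one_sub_mul_one_sub_pow {φ : K⟦X⟧} (hφ : constantCoeff φ ≠ 1) (c : ℕ) :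
    (1 - φ)⁻¹ * (1 - φ ^ c) = ∑ j ∈ range c, φ ^ j := by
  have hunit : constantCoeff (1 - φ) ≠ 0 := by
    rwa [map_sub, map_one, sub_ne_zero, ne_comm]
  rw [← mul_neg_geom_sum, ← mul_assoc, PowerSeries.inv_mul_cancel _ hunit, one_mul]

lemma sum_inv_one_sub_C_mul_mul_one_sub_pow [DecidableEq K] {c : ℕ} {ζ : K}
    (hζ : IsPrimitiveRoot ζ c) {f : K⟦X⟧} (hf : constantCoeff f = 1) :
    (∑ ξ ∈ (nthRootsFinset c (1 : K)).erase 1, (1 - C ξ * f)⁻¹) * (1 - f ^ c)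
      = c - ∑ j ∈ range c, f ^ j := by
  rcases c.eq_zero_or_pos with rfl | hc
  · simp
  have hterm : ∀ ξ ∈ nthRootsFinset c (1 : K), ξ ≠ 1 →
      (1 - C ξ * f)⁻¹ * (1 - f ^ c) = ∑ j ∈ range c, (C ξ * f) ^ j := by
    intro ξ hξ hξ1
    have hξc : ξ ^ c = 1 := (Polynomial.mem_nthRootsFinset hc 1).mp hξ
    rw [← inv_one_sub_mul_one_sub_pow (by simpa [hf] using hξ1) c, mul_pow, ← map_pow, hξc,
      map_one, one_mul]
  rw [sum_mul, sum_congr rfl fun ξ hξ => hterm ξ (mem_of_mem_erase hξ) (ne_of_mem_erase hξ),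
    sum_erase_eq_sub (Polynomial.one_mem_nthRootsFinset hc), ← algebraMap_eq,
    hζ.sum_nthRootsFinset_geom_sum, map_one, one_mul]

theorem X_mul_sum_inv_one_sub_C_mul_exp [CharZero K] [DecidableEq K] {c : ℕ} (hc : c ≠ 0)
    {ζ : K} (hζ : IsPrimitiveRoot ζ c) :
    X * ∑ ξ ∈ (nthRootsFinset c (1 : K)).erase 1, (1 - C ξ * exp K)⁻¹
      = bernoulliPowerSeries K - rescale (c : K) (bernoulliPowerSeries K) := by
  -- after multiplication by `1 - exp^c`, both sides equal `X * (c - ∑_{j<c} exp^j)`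
  apply mul_right_cancel₀ (one_sub_exp_pow_ne_zero hc)
  rw [mul_assoc, sum_inv_one_sub_C_mul_mul_one_sub_pow hζ constantCoeff_exp,
    ← map_natCast (C (R := K))]
  linear_combination (∑ j ∈ range c, exp K ^ j) * bernoulliPowerSeries_mul_exp_sub_one K
    - bernoulliPowerSeries K * geom_sum_mul (exp K) c
    - rescale_bernoulliPowerSeries_mul_exp_pow_sub_one (A := K) c

end PowerSeries

/-- For `c ≥ 2` and `n ∈ ℕ₀`:
`Σ_{ξ ∈ μ_c, ξ ≠ 1} ℬ_n(ξ) = (1 − c^{n+1})·B_{n+1}/(n+1)`. -/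
theorem sum_twistedBernoulli_nthRoots (c : ℕ) (hc : 2 ≤ c) (n : ℕ) :
    ∑ ξ ∈ (Polynomial.nthRootsFinset c (1 : ℂ)).erase 1, twistedBernoulli ξ n
      = (1 - (c : ℂ) ^ (n + 1)) * (bernoulli (n + 1) : ℂ) / ((n : ℂ) + 1) := by
  have hgen := congrArg (coeff (n + 1))
    (X_mul_sum_inv_one_sub_C_mul_exp (by omega) (Complex.isPrimitiveRoot_exp c (by omega)))
  rw [coeff_succ_X_mul, coeff_bernoulliPowerSeries_sub_rescale] at hgen
  simp only [twistedBernoulli, ← mul_sum, ← map_sum, hgen, map_div₀, eq_ratCast,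
    Rat.cast_natCast, Nat.factorial_succ]
  push_cast
  field_simp [n.factorial_ne_zero]
end

section
/- Let r ≥ 1, let γ_1,…,γ_r ∈ ℂ, and let ξ_1,…,ξ_r ∈ ℂ∖{1} be roots of unity. Then for all n_1,…,n_r ∈ ℕ₀, the twisted multiple Bernoulli number ℬ(n_1,…,n_r; ξ_1,…,ξ_r; γ_1,…,γ_r) lies in the ℚ-subalgebra of ℂ generated by the set {ℬ_m(ξ_j) : m ∈ ℕ₀, 1 ≤ j ≤ r} ∪ {γ_1,…,γ_r} (i.e. it belongs to Algebra.adjoin ℚ of this set). -/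
/-- The power series `exp(γ (t_j + ⋯ + t_r)) = Σ_{m≥0} γ^m (t_j+⋯+t_r)^m / m!`
in `ℂ[[t_1,…,t_r]]`, defined coefficientwise (the `m`-th summand is homogeneous of
degree `m`, so only `m = |d|` contributes to the coefficient at a monomial `d`). -/
noncomputable def expShift (r : ℕ) (j : Fin r) (γ : ℂ) : MvPowerSeries (Fin r) ℂ :=
  fun d =>
    (γ ^ (d.sum fun _ e => e) / (Nat.factorial (d.sum fun _ e => e) : ℂ)) *
      MvPowerSeries.coeff d
        ((∑ k ∈ Finset.univ.filter fun k => j ≤ k, MvPowerSeries.X k) ^ (d.sum fun _ e => e))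

/-- The twisted multiple Bernoulli numbers `ℬ(n_1,…,n_r; ξ_1,…,ξ_r; γ_1,…,γ_r)`,
defined by `∏_{j=1}^r (1 − ξ_j·exp(γ_j(t_j+⋯+t_r)))⁻¹
  = Σ_n ℬ(n;ξ;γ) t_1^{n_1}⋯t_r^{n_r}/(n_1!⋯n_r!)` in `ℂ[[t_1,…,t_r]]`. -/
noncomputable def multipleTwistedBernoulli (r : ℕ) (ξ γ : Fin r → ℂ) (n : Fin r → ℕ) : ℂ :=
  (∏ j, (Nat.factorial (n j) : ℂ)) *
    MvPowerSeries.coeff (Finsupp.equivFunOnFinite.symm n)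
      (∏ j, (1 - MvPowerSeries.C (ξ j) * expShift r j (γ j))⁻¹)

/-!
Substitution of the linear form `γ (t_j + ⋯ + t_r)` is a ring homomorphism, so it carries
`1 / (1 - ξ eᵗ) = Σ ℬ_m(ξ) tᵐ / m!` to the inverse of `1 - ξ exp(γ (t_j + ⋯ + t_r))`. As the form
is homogeneous of degree one, the coefficient of the result at a monomial `d` is
`ℬ_{|d|}(ξ) γ^{|d|} / |d|!` times a coefficient of `(t_j + ⋯ + t_r)^{|d|}`, which is rational.
The coefficients of the product over `j` are sums of products of these.
-/

namespace MvPowerSeries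

variable {σ k : Type*} [Field k]

theorem inv_eq_of_mul_eq_one {φ ψ : MvPowerSeries σ k} (h : φ * ψ = 1) : φ⁻¹ = ψ := by
  have hφ : constantCoeff φ ≠ 0 :=
    left_ne_zero_of_mul_eq_one (by simpa using congrArg constantCoeff h)
  rwa [MvPowerSeries.inv_eq_iff_mul_eq_one hφ, mul_comm]

end MvPowerSeries

namespace PowerSeries

variable {σ R : Type*} [CommRing R]

theorem map_inv_of_constantCoeff_ne_zero {k : Type*} [Field k]
    (φ : PowerSeries k →+* MvPowerSeries σ k) {f : PowerSeries k} (hf : constantCoeff f ≠ 0) :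
    φ f⁻¹ = (φ f)⁻¹ := by
  refine (MvPowerSeries.inv_eq_of_mul_eq_one ?_).symm
  rw [← map_mul, PowerSeries.mul_inv_cancel f hf, map_one]

theorem hasSubst_of_isHomogeneous_one {p : MvPolynomial σ R} (hp : p.IsHomogeneous 1) :
    HasSubst (p : MvPowerSeries σ R) := by
  apply HasSubst.of_constantCoeff_zero
  rw [← MvPowerSeries.coeff_zero_eq_constantCoeff_apply, MvPolynomial.coeff_coe]
  exact hp.coeff_eq_zero (by simp)

theorem coeff_subst_of_isHomogeneous_one {p : MvPolynomial σ R} (hp : p.IsHomogeneous 1)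
    (f : PowerSeries R) (d : σ →₀ ℕ) :
    MvPowerSeries.coeff d (subst (p : MvPowerSeries σ R) f) =
      coeff d.degree f * MvPolynomial.coeff d (p ^ d.degree) := by
  simp only [coeff_subst (hasSubst_of_isHomogeneous_one hp), ← MvPolynomial.coe_pow,
    MvPolynomial.coeff_coe, smul_eq_mul]
  refine finsum_eq_single _ d.degree fun m hm => ?_
  rw [(hp.pow m).coeff_eq_zero (by rw [one_mul]; exact Ne.symm hm), mul_zero]

end PowerSeries

theorem MvPolynomial.isHomogeneous_sum_X {σ R : Type*} [CommSemiring R] (s : Finset σ) :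
    (∑ k ∈ s, X k : MvPolynomial σ R).IsHomogeneous 1 :=
  MvPolynomial.IsHomogeneous.sum s _ 1 fun k _ => MvPolynomial.isHomogeneous_X R k

theorem MvPolynomial.coe_sum {σ R ι : Type*} [CommSemiring R] (s : Finset ι)
    (f : ι → MvPolynomial σ R) :
    ((∑ i ∈ s, f i : MvPolynomial σ R) : MvPowerSeries σ R) =
      ∑ i ∈ s, (f i : MvPowerSeries σ R) :=
  map_sum MvPolynomial.coeToMvPowerSeries.ringHom f s

theorem coeff_inv_one_sub_C_mul_exp (ξ : ℂ) (m : ℕ) :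
    PowerSeries.coeff m (1 - PowerSeries.C ξ * PowerSeries.exp ℂ)⁻¹ =
      twistedBernoulli ξ m / m.factorial := by
  rw [twistedBernoulli, mul_div_cancel_left₀ _ (Nat.cast_ne_zero.2 m.factorial_ne_zero)]

noncomputable def tailSum (R : Type*) [CommSemiring R] {r : ℕ} (j : Fin r) :
    MvPolynomial (Fin r) R :=
  ∑ k ∈ Finset.univ.filter fun k => j ≤ k, MvPolynomial.X k

section tailSum

variable {r : ℕ} (j : Fin r)

theorem isHomogeneous_tailSum (R : Type*) [CommSemiring R] : (tailSum R j).IsHomogeneous 1 :=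
  MvPolynomial.isHomogeneous_sum_X _

theorem map_tailSum {R S : Type*} [CommSemiring R] [CommSemiring S] (f : R →+* S) :
    MvPolynomial.map f (tailSum R j) = tailSum S j := by
  simp [tailSum]

end tailSum

section expShift

variable {r : ℕ} (j : Fin r) (γ : ℂ)

theorem expShift_eq_subst :
    expShift r j γ = PowerSeries.subst
      ((MvPolynomial.C γ * tailSum ℂ j : MvPolynomial (Fin r) ℂ) : MvPowerSeries (Fin r) ℂ)
      (PowerSeries.exp ℂ) := by
  ext d
  rw [PowerSeries.coeff_subst_of_isHomogeneous_one ((isHomogeneous_tailSum j ℂ).C_mul γ),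
    PowerSeries.coeff_exp, mul_pow, ← MvPolynomial.C_pow, MvPolynomial.coeff_C_mul,
    ← MvPolynomial.coeff_coe]
  simp only [tailSum, MvPolynomial.coe_pow, MvPolynomial.coe_sum, MvPolynomial.coe_X, map_div₀,
    map_one, map_natCast]
  rw [← mul_assoc, one_div_mul_eq_div]
  rfl

theorem inv_one_sub_C_mul_expShift {ξ : ℂ} (hξ : ξ ≠ 1) :
    (1 - MvPowerSeries.C ξ * expShift r j γ)⁻¹ = PowerSeries.subst
      ((MvPolynomial.C γ * tailSum ℂ j : MvPolynomial (Fin r) ℂ) : MvPowerSeries (Fin r) ℂ)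
      (1 - PowerSeries.C ξ * PowerSeries.exp ℂ)⁻¹ := by
  let φ : PowerSeries ℂ →+* MvPowerSeries (Fin r) ℂ := (PowerSeries.substAlgHom
    (PowerSeries.hasSubst_of_isHomogeneous_one ((isHomogeneous_tailSum j ℂ).C_mul γ))).toRingHom
  have hφ : φ (1 - PowerSeries.C ξ * PowerSeries.exp ℂ) =
      1 - MvPowerSeries.C ξ * expShift r j γ := by
    simp only [φ, AlgHom.toRingHom_eq_coe, RingHom.coe_coe, map_sub, map_one, map_mul,
      PowerSeries.coe_substAlgHom, PowerSeries.subst_C, expShift_eq_subst]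
  have hξ' : PowerSeries.constantCoeff (1 - PowerSeries.C ξ * PowerSeries.exp ℂ) ≠ 0 := by
    simpa [sub_eq_zero] using hξ.symm
  rw [← hφ, ← PowerSeries.map_inv_of_constantCoeff_ne_zero φ hξ']
  simp [φ, PowerSeries.coe_substAlgHom]

theorem coeff_inv_one_sub_C_mul_expShift_mem {A : Subalgebra ℚ ℂ} {ξ : ℂ} (hξ : ξ ≠ 1)
    (hγ : γ ∈ A) (hB : ∀ m, twistedBernoulli ξ m ∈ A) (d : Fin r →₀ ℕ) :
    MvPowerSeries.coeff d (1 - MvPowerSeries.C ξ * expShift r j γ)⁻¹ ∈ A := by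
  rw [inv_one_sub_C_mul_expShift j γ hξ,
    PowerSeries.coeff_subst_of_isHomogeneous_one ((isHomogeneous_tailSum j ℂ).C_mul γ),
    coeff_inv_one_sub_C_mul_exp, mul_pow, ← MvPolynomial.C_pow, MvPolynomial.coeff_C_mul,
    ← map_tailSum j (algebraMap ℚ ℂ), ← map_pow, MvPolynomial.coeff_map, div_eq_mul_inv]
  have hfac (m : ℕ) : ((m.factorial : ℂ))⁻¹ ∈ A := by
    simpa using A.algebraMap_mem ((m.factorial : ℚ)⁻¹)
  exact A.mul_mem (A.mul_mem (hB _) (hfac _)) (A.mul_mem (A.pow_mem hγ _) (A.algebraMap_mem _))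

end expShift

theorem multipleTwistedBernoulli_mem_adjoin_general (r : ℕ) (γ ξ : Fin r → ℂ)
    (hξ1 : ∀ j, ξ j ≠ 1) (n : Fin r → ℕ) :
    multipleTwistedBernoulli r ξ γ n ∈
      Algebra.adjoin ℚ
        ((⋃ j : Fin r, Set.range fun m : ℕ => twistedBernoulli (ξ j) m) ∪ Set.range γ) := by
  set A := Algebra.adjoin ℚ
    ((⋃ j : Fin r, Set.range fun m : ℕ => twistedBernoulli (ξ j) m) ∪ Set.range γ)
  rw [multipleTwistedBernoulli, MvPowerSeries.coeff_prod]
  refine A.mul_mem ?_ (A.sum_mem fun l _ => A.prod_mem fun j _ => ?_)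
  · exact_mod_cast A.natCast_mem (∏ j, (n j).factorial)
  · exact coeff_inv_one_sub_C_mul_expShift_mem j (γ j) (hξ1 j)
      (Algebra.subset_adjoin (Or.inr ⟨j, rfl⟩))
      (fun m => Algebra.subset_adjoin (Or.inl (Set.mem_iUnion_of_mem j (Set.mem_range_self m))))
      (l j)

/-- The twisted multiple Bernoulli number `ℬ(n;ξ;γ)` lies in the `ℚ`-subalgebra of `ℂ`
generated by the single twisted Bernoulli numbers `ℬ_m(ξ_j)` together with `γ_1,…,γ_r`. -/
theorem multipleTwistedBernoulli_mem_adjoin (r : ℕ) (hr : 1 ≤ r) (γ ξ : Fin r → ℂ)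
    (hξ1 : ∀ j, ξ j ≠ 1) (hξ : ∀ j, ∃ m : ℕ, 0 < m ∧ ξ j ^ m = 1) (n : Fin r → ℕ) :
    multipleTwistedBernoulli r ξ γ n ∈
      Algebra.adjoin ℚ
        ((⋃ j : Fin r, Set.range fun m : ℕ => twistedBernoulli (ξ j) m) ∪ Set.range γ) :=
  multipleTwistedBernoulli_mem_adjoin_general r γ ξ hξ1 n
end

section
/- Let p be a prime, let c ∈ ℕ with c ≥ 2 and gcd(c,p) = 1, and let n ∈ ℕ₀. For each N ≥ 1 set s_N := Σ_{a=0}^{p^N−1} aⁿ · ( Σ_{ξ ∈ μ_c, ξ ≠ 1} ξ^a/(1 − ξ^{p^N}) ) ∈ ℂ (the denominators are nonzero since gcd(c,p) = 1). Then: (1) for every N ≥ 1 there exists q_N ∈ ℚ with (q_N : ℂ) = s_N; and (2) in ℚ_p the sequence (q_N) converges to (1 − c^{n+1})·B_{n+1}/(n+1). (For n = 0 the limit equals (c−1)/2.) -/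
/-!
Put `M = p^N`. Substituting `a = c b mod M` and `η = ξ^M` (both bijections since `gcd(c, p) = 1`)
turns the inner sum over `ξ` into `(c - 1)/2 - ⌊c b / M⌋`, so `s_N` is rational. Counting
`⌊c b / M⌋` as the number of `0 < i < c` with `i M ≤ c b`, and writing
`S(x) = (B_{n+1}(x) - B_{n+1})/(n+1)`, so that `S(x) = Σ_{k<x} kⁿ` for `x ∈ ℕ`, gives
`s_N = cⁿ (Σ_{i<c} S(⌈i M / c⌉) - (c - 1)/2 · S(M))` up to an element of `(M/2) ℤ`.
In `ℚ_p` we have `⌈i M / c⌉ = r_i / c + O(M)` where `i ↦ r_i ≡ -i M (mod c)` permutes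
`{0, …, c - 1}`, and `S` is Lipschitz on `ℤ_p`; hence `s_N = cⁿ Σ_{r<c} S(r/c) + O(p^{-N})`, and
the multiplication theorem for Bernoulli polynomials evaluates `cⁿ Σ_{r<c} S(r/c)` as
`(1 - c^{n+1}) B_{n+1}/(n+1)`.
-/
/-- The Riemann sums `s_N = Σ_{a=0}^{p^N−1} aⁿ · Σ_{ξ ∈ μ_c, ξ≠1} ξ^a/(1 − ξ^{p^N})`
defining the integral `∫_{ℤ_p} xⁿ dμ̃_c(x)` against the Mazur measure. -/
noncomputable def mazurRiemannSum (p c n N : ℕ) : ℂ :=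
  ∑ a ∈ Finset.range (p ^ N),
    (a : ℂ) ^ n *
      ∑ ξ ∈ (Polynomial.nthRootsFinset c (1 : ℂ)).erase 1, ξ ^ a / (1 - ξ ^ (p ^ N))

section

open Finset Polynomial

theorem Nat.Coprime.pos_of_ne_one {c p : ℕ} (h : c.Coprime p) (hp : p ≠ 1) : 0 < c :=
  Nat.pos_of_ne_zero fun hc => hp ((Nat.coprime_zero_left p).1 (hc ▸ h))

theorem Finset.sum_comp_eq_of_injOn {α M : Type*} [AddCommMonoid M] {s : Finset α} {f : α → α}
    (hf : Set.MapsTo f s s) (hinj : Set.InjOn f s) (g : α → M) :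
    ∑ x ∈ s, g (f x) = ∑ x ∈ s, g x :=
  sum_nbij f hf hinj (surjOn_of_injOn_of_card_le f hf hinj le_rfl) fun _ _ => rfl

theorem Finset.sum_range_comp_mul_mod {M : Type*} [AddCommMonoid M] {k m : ℕ} (hk : k.Coprime m)
    (g : ℕ → M) : ∑ i ∈ range m, g (k * i % m) = ∑ i ∈ range m, g i := by
  refine sum_comp_eq_of_injOn (fun i hi => ?_) (fun a ha b hb hab => ?_) g
  · have hi : i < m := mem_range.1 hi
    exact mem_range.2 (Nat.mod_lt _ (by omega))
  · exact (Nat.ModEq.cancel_left_of_coprime hk.symm hab).eq_of_lt_of_lt (mem_range.1 ha)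
      (mem_range.1 hb)

section RootsOfUnity

variable {K : Type*} [Field K] {c : ℕ} {ζ : K}

theorem IsPrimitiveRoot.sum_nthRootsFinset_pow_eq_zero [NeZero c] (hζ : IsPrimitiveRoot ζ c)
    {k : ℕ} (hk : ¬ c ∣ k) : ∑ ξ ∈ nthRootsFinset c (1 : K), ξ ^ k = 0 := by
  have hmem : ∀ {ξ : K}, ξ ∈ nthRootsFinset c (1 : K) ↔ ξ ^ c = 1 :=
    Polynomial.mem_nthRootsFinset (NeZero.pos c) 1
  have hrot : ∑ ξ ∈ nthRootsFinset c (1 : K), (ζ * ξ) ^ k =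
      ∑ ξ ∈ nthRootsFinset c (1 : K), ξ ^ k :=
    sum_comp_eq_of_injOn (fun ξ hξ => hmem.2 (by rw [mul_pow, hζ.pow_eq_one, hmem.1 hξ, one_mul]))
      (fun _ _ _ _ h => mul_left_cancel₀ (hζ.ne_zero (NeZero.ne c)) h) (· ^ k)
  simp_rw [mul_pow, ← mul_sum] at hrot
  have hζk : ζ ^ k - 1 ≠ 0 := sub_ne_zero.2 fun h => hk (hζ.dvd_of_pow_eq_one k h)
  exact (mul_eq_zero.1 (by linear_combination hrot)).resolve_left hζk

variable [DecidableEq K]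

theorem mem_erase_one_nthRootsFinset (hc : 0 < c) {ξ : K} :
    ξ ∈ (nthRootsFinset c (1 : K)).erase 1 ↔ ξ ≠ 1 ∧ ξ ^ c = 1 := by
  rw [mem_erase, Polynomial.mem_nthRootsFinset hc]

theorem sum_erase_one_comp_pow {β : Type*} [AddCommMonoid β] {M : ℕ} (hM : M.Coprime c)
    (g : K → β) :
    ∑ ξ ∈ (nthRootsFinset c (1 : K)).erase 1, g (ξ ^ M) =
      ∑ ξ ∈ (nthRootsFinset c (1 : K)).erase 1, g ξ := by
  rcases Nat.eq_zero_or_pos c with rfl | hc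
  · simp
  have hmem : ∀ {ξ : K}, ξ ∈ (nthRootsFinset c (1 : K)).erase 1 ↔ ξ ≠ 1 ∧ ξ ^ c = 1 :=
    mem_erase_one_nthRootsFinset hc
  have hgcd : ∀ {x : K}, x ^ M = 1 → x ^ c = 1 → x = 1 := fun h1 h2 => by
    simpa [hM.gcd_eq_one] using pow_gcd_eq_one.2 ⟨h1, h2⟩
  refine sum_comp_eq_of_injOn (fun ξ hξ => ?_) (fun ξ hξ η hη h => ?_) g
  · obtain ⟨hξ1, hξc⟩ := hmem.1 hξ
    refine hmem.2 ⟨fun h => hξ1 (hgcd h hξc), by rw [← pow_mul, mul_comm, pow_mul, hξc, one_pow]⟩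
  · have hη0 : η ≠ 0 := ne_zero_of_mem_nthRootsFinset one_ne_zero (mem_of_mem_erase hη)
    have hc' := (hmem.1 hξ).2
    have hc'' := (hmem.1 hη).2
    refine (div_eq_one_iff_eq hη0).1 (hgcd ?_ ?_)
    · rw [div_pow, h, div_self (pow_ne_zero _ hη0)]
    · rw [div_pow, hc', hc'', div_one]

variable [NeZero c]

theorem IsPrimitiveRoot.sum_erase_one_pow (hζ : IsPrimitiveRoot ζ c) {k : ℕ} (hk : ¬ c ∣ k) :
    ∑ ξ ∈ (nthRootsFinset c (1 : K)).erase 1, ξ ^ k = -1 := by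
  have := sum_erase_add _ (· ^ k) (one_mem_nthRootsFinset (R := K) (NeZero.pos c))
  rw [hζ.sum_nthRootsFinset_pow_eq_zero hk, one_pow] at this
  linear_combination this

theorem IsPrimitiveRoot.card_erase_one (hζ : IsPrimitiveRoot ζ c) :
    ((nthRootsFinset c (1 : K)).erase 1).card = c - 1 := by
  rw [card_erase_of_mem (one_mem_nthRootsFinset (NeZero.pos c)), hζ.card_nthRootsFinset]

variable [CharZero K]

theorem IsPrimitiveRoot.sum_inv_one_sub (hζ : IsPrimitiveRoot ζ c) :
    ∑ ξ ∈ (nthRootsFinset c (1 : K)).erase 1, (1 - ξ)⁻¹ = ((c : K) - 1) / 2 := by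
  have hmem : ∀ {ξ : K}, ξ ∈ (nthRootsFinset c (1 : K)).erase 1 ↔ ξ ≠ 1 ∧ ξ ^ c = 1 :=
    mem_erase_one_nthRootsFinset (NeZero.pos c)
  have hinv : ∑ ξ ∈ (nthRootsFinset c (1 : K)).erase 1, (1 - ξ⁻¹)⁻¹ =
      ∑ ξ ∈ (nthRootsFinset c (1 : K)).erase 1, (1 - ξ)⁻¹ :=
    sum_comp_eq_of_injOn (fun ξ hξ => hmem.2 ⟨inv_ne_one.2 (hmem.1 hξ).1, by
      rw [inv_pow, (hmem.1 hξ).2, inv_one]⟩) inv_injective.injOn (fun ξ => (1 - ξ)⁻¹)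
  have hterm : ∀ ξ ∈ (nthRootsFinset c (1 : K)).erase 1, (1 - ξ⁻¹)⁻¹ = 1 - (1 - ξ)⁻¹ := by
    intro ξ hξ
    have hξ0 : ξ ≠ 0 := ne_zero_of_mem_nthRootsFinset one_ne_zero (mem_of_mem_erase hξ)
    have hξ1 : ξ - 1 ≠ 0 := sub_ne_zero.2 (hmem.1 hξ).1
    have h1ξ : 1 - ξ ≠ 0 := sub_ne_zero.2 (hmem.1 hξ).1.symm
    field_simp
    ring
  rw [sum_congr rfl hterm, sum_sub_distrib, sum_const, hζ.card_erase_one, nsmul_one,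
    Nat.cast_sub (NeZero.one_le), Nat.cast_one] at hinv
  linear_combination -hinv / 2

theorem IsPrimitiveRoot.sum_pow_sub_div_one_sub (hζ : IsPrimitiveRoot ζ c) {e : ℕ} (he : e < c) :
    ∑ ξ ∈ (nthRootsFinset c (1 : K)).erase 1, ξ ^ (c - e) / (1 - ξ) = ((c : K) - 1) / 2 - e := by
  have hgeom : ∀ ξ ∈ (nthRootsFinset c (1 : K)).erase 1,
      ξ ^ (c - e) / (1 - ξ) = (1 - ξ)⁻¹ - ∑ k ∈ range (c - e), ξ ^ k := by
    intro ξ hξ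
    have h1 : 1 - ξ ≠ 0 := sub_ne_zero.2 (ne_of_mem_erase hξ).symm
    rw [div_eq_iff h1, sub_mul, inv_mul_cancel₀ h1]
    linear_combination -geom_sum_mul ξ (c - e)
  obtain ⟨j, hj⟩ : ∃ j, c - e = j + 1 := ⟨c - e - 1, by omega⟩
  rw [sum_congr rfl hgeom, sum_sub_distrib, hζ.sum_inv_one_sub, sum_comm, hj, sum_range_succ',
    sum_congr rfl fun k hk => hζ.sum_erase_one_pow (k := k + 1) fun h =>
      (Nat.le_of_dvd k.succ_pos h).not_gt (by have := mem_range.1 hk; omega)]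
  simp only [pow_zero, sum_const, hζ.card_erase_one, nsmul_eq_mul, mul_one, card_range]
  have hjK := congrArg (Nat.cast (R := K)) hj
  push_cast [Nat.cast_sub he.le, Nat.cast_sub (NeZero.one_le : 1 ≤ c)] at hjK ⊢
  linear_combination -hjK

theorem IsPrimitiveRoot.sum_pow_mul_mod_div_one_sub_pow (hζ : IsPrimitiveRoot ζ c) {M b : ℕ}
    (hM : M.Coprime c) (hb : b < M) :
    ∑ ξ ∈ (nthRootsFinset c (1 : K)).erase 1, ξ ^ (c * b % M) / (1 - ξ ^ M) =
      ((c : K) - 1) / 2 - (c * b / M : ℕ) := by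
  have he : c * b / M < c := (Nat.div_lt_iff_lt_mul (by omega)).2
    (Nat.mul_lt_mul_of_pos_left hb (NeZero.pos c))
  have hpow : ∀ ξ ∈ (nthRootsFinset c (1 : K)).erase 1,
      ξ ^ (c * b % M) / (1 - ξ ^ M) = (ξ ^ M) ^ (c - c * b / M) / (1 - ξ ^ M) := by
    intro ξ hξ
    have hξc : ξ ^ c = 1 := ((mem_erase_one_nthRootsFinset (NeZero.pos c)).1 hξ).2
    have hξ0 : ξ ^ (M * (c * b / M)) ≠ 0 :=
      pow_ne_zero _ (ne_zero_of_mem_nthRootsFinset one_ne_zero (mem_of_mem_erase hξ))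
    congr 1
    refine mul_right_cancel₀ hξ0 ?_
    rw [← pow_add, Nat.mod_add_div, ← pow_mul, ← pow_add, ← Nat.mul_add, Nat.sub_add_cancel he.le,
      pow_mul, mul_comm M, pow_mul, hξc, one_pow, one_pow]
  rw [sum_congr rfl hpow, sum_erase_one_comp_pow hM fun η => η ^ (c - c * b / M) / (1 - η),
    hζ.sum_pow_sub_div_one_sub he]

end RootsOfUnity

/-- `s_N` after the substitution `a = c b mod M`, with the sum over roots of unity evaluated as
`(c - 1)/2 - ⌊c b / M⌋`. -/
def mazurRatSum (c n M : ℕ) : ℚ :=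
  ∑ b ∈ range M, ((c * b % M : ℕ) : ℚ) ^ n * (((c : ℚ) - 1) / 2 - (c * b / M : ℕ))

theorem mazurRiemannSum_eq_mazurRatSum {p c : ℕ} (n N : ℕ) (hc : 0 < c) (hcp : c.Coprime p) :
    mazurRiemannSum p c n N = mazurRatSum c n (p ^ N) := by
  have : NeZero c := ⟨hc.ne'⟩
  have hζ := Complex.isPrimitiveRoot_exp c hc.ne'
  rw [mazurRiemannSum, ← sum_range_comp_mul_mod (hcp.pow_right N), mazurRatSum, Rat.cast_sum]
  refine sum_congr rfl fun b hb => ?_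
  rw [hζ.sum_pow_mul_mod_div_one_sub_pow (hcp.pow_right N).symm (mem_range.1 hb)]
  push_cast
  rfl

theorem Polynomial.eq_C_eval_zero_of_eval_add {K : Type*} [Field K] [CharZero K] {P : K[X]} {a : K}
    (ha : a ≠ 0) (hP : ∀ x, P.eval (x + a) = P.eval x) : P = C (P.eval 0) := by
  have hk : ∀ k : ℕ, P.eval (k * a) = P.eval 0 := by
    intro k
    induction k with
    | zero => simp
    | succ k ih => rw [Nat.cast_succ, add_mul, one_mul, hP, ih]
  refine eq_of_infinite_eval_eq _ _ (Set.infinite_of_injective_forall_mem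
    (f := fun k : ℕ => (k : K) * a) (fun i j h => by simpa [ha] using h) fun k => ?_)
  simp [hk]

/-- Both `cᵐ Σ_{r<c} B_{m+1}(x + r/c)` and `B_{m+1}(c x)` increase by `(m + 1) cᵐ xᵐ` under
`x ↦ x + 1/c`, so they differ by a constant; differentiating at `x = 0` gives the claim. -/
theorem Polynomial.sum_bernoulli_eval_div {c : ℕ} (hc : c ≠ 0) (m : ℕ) :
    (c : ℚ) ^ m * ∑ r ∈ range c, (bernoulli m).eval ((r : ℚ) / c) = c * _root_.bernoulli m := by
  have hc' : (c : ℚ) ≠ 0 := Nat.cast_ne_zero.2 hc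
  set D : ℚ[X] := C ((c : ℚ) ^ m) * ∑ r ∈ range c, (bernoulli (m + 1)).comp (X + C ((r : ℚ) / c)) -
    (bernoulli (m + 1)).comp (C (c : ℚ) * X) with hD
  have hper : ∀ x : ℚ, D.eval (x + 1 / c) = D.eval x := by
    intro x
    have htel : ∑ r ∈ range c, (bernoulli (m + 1)).eval (x + 1 / c + r / c) -
        ∑ r ∈ range c, (bernoulli (m + 1)).eval (x + r / c) = (m + 1) * x ^ m := by
      rw [← sum_sub_distrib]
      convert sum_range_sub (fun r : ℕ => (bernoulli (m + 1)).eval (x + r / c)) c using 1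
      · refine sum_congr rfl fun r _ => ?_
        push_cast
        ring_nf
      · rw [div_self hc', Nat.cast_zero, zero_div, add_zero, add_comm x 1, bernoulli_eval_one_add]
        push_cast
        ring
    have hscale : (bernoulli (m + 1)).eval (c * (x + 1 / c)) =
        (bernoulli (m + 1)).eval (c * x) + (m + 1) * c ^ m * x ^ m := by
      rw [mul_add, mul_one_div_cancel hc', add_comm, bernoulli_eval_one_add]
      push_cast
      ring
    simp only [hD, eval_sub, eval_mul, eval_C, eval_finsetSum, eval_comp, eval_add, eval_X]
    rw [hscale]
    linear_combination (c : ℚ) ^ m * htel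
  have hderiv := congrArg (eval 0 ∘ derivative)
    (eq_C_eval_zero_of_eval_add (one_div_ne_zero hc') hper)
  simp only [hD, Function.comp, derivative_sub, derivative_mul, derivative_C, derivative_sum,
    derivative_comp, derivative_add, derivative_X, derivative_bernoulli_add_one, eval_sub,
    eval_add, eval_mul, eval_C, eval_finsetSum, eval_comp, eval_X, eval_one, eval_natCast,
    eval_zero] at hderiv
  simp only [zero_mul, zero_add, mul_zero, mul_one, bernoulli_eval_zero, ← mul_sum] at hderiv
  have hm : (m : ℚ) + 1 ≠ 0 := by positivity
  apply mul_left_cancel₀ hm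
  linear_combination hderiv

noncomputable def faulhaber (n : ℕ) : ℚ[X] :=
  C ((n : ℚ) + 1)⁻¹ * (Polynomial.bernoulli (n + 1) - C (_root_.bernoulli (n + 1)))

theorem faulhaber_eval_natCast (n m : ℕ) :
    (faulhaber n).eval (m : ℚ) = ∑ k ∈ range m, (k : ℚ) ^ n := by
  have hn : (n : ℚ) + 1 ≠ 0 := by positivity
  rw [faulhaber, eval_mul, eval_C, eval_sub, eval_C, ← sum_range_pow_eq_bernoulli_sub,
    inv_mul_cancel_left₀ hn]

theorem faulhaber_eval_zero (n : ℕ) : (faulhaber n).eval 0 = 0 := by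
  simpa using faulhaber_eval_natCast n 0

theorem faulhaber_sum_eval_div {c : ℕ} (hc : c ≠ 0) (n : ℕ) :
    (c : ℚ) ^ n * ∑ r ∈ range c, (faulhaber n).eval ((r : ℚ) / c) =
      (1 - (c : ℚ) ^ (n + 1)) * _root_.bernoulli (n + 1) / (n + 1) := by
  have hc' : (c : ℚ) ≠ 0 := Nat.cast_ne_zero.2 hc
  have h : (c : ℚ) ^ n * ∑ r ∈ range c, (Polynomial.bernoulli (n + 1)).eval ((r : ℚ) / c) =
      _root_.bernoulli (n + 1) := by
    refine mul_left_cancel₀ hc' ?_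
    rw [← mul_assoc, ← pow_succ', sum_bernoulli_eval_div hc]
  simp only [faulhaber, eval_mul, eval_C, eval_sub, ← mul_sum, sum_sub_distrib, sum_const,
    card_range, nsmul_eq_mul]
  field_simp
  linear_combination h

theorem Nat.mul_ceilDiv_eq_add_mod {c : ℕ} (hc : 0 < c) (x : ℕ) :
    c * (x ⌈/⌉ c) = x + (c - 1) * x % c := by
  have hr : (c - 1) * x % c < c := Nat.mod_lt _ hc
  obtain ⟨t, ht⟩ : c ∣ x + (c - 1) * x % c := by
    have hcx : x + (c - 1) * x = c * x := by
      obtain ⟨c, rfl⟩ := Nat.exists_eq_add_of_lt hc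
      simp only [zero_add, Nat.add_sub_cancel]; ring
    rw [Nat.dvd_iff_mod_eq_zero, Nat.add_mod, Nat.mod_mod, ← Nat.add_mod, hcx, Nat.mul_mod_right]
  rw [ht, ceilDiv_eq_add_pred_div, Nat.div_eq_of_lt_le (k := t)]
  · rw [mul_comm]; omega
  · rw [add_mul, one_mul, mul_comm]; omega

theorem card_filter_mul_le {c M b : ℕ} (hc : 0 < c) (hb : b < M) :
    #{i ∈ range c | M * i ≤ c * b} = c * b / M + 1 := by
  have hM : 0 < M := by omega
  have hlt : c * b / M < c := (Nat.div_lt_iff_lt_mul hM).2 (by nlinarith)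
  rw [← card_range (c * b / M + 1)]
  congr 1
  ext i
  simp only [mem_filter, mem_range, Nat.lt_succ_iff, Nat.le_div_iff_mul_le hM, mul_comm M i]
  constructor
  · exact fun h => h.2
  · intro h
    exact ⟨lt_of_le_of_lt ((Nat.le_div_iff_mul_le hM).2 h) hlt, h⟩

theorem sum_pow_mul_div_add_one {c M : ℕ} (hc : 0 < c) (n : ℕ) :
    ∑ b ∈ range M, (b : ℚ) ^ n * ((c * b / M : ℕ) + 1) =
      ∑ i ∈ range c, ((faulhaber n).eval (M : ℚ) - (faulhaber n).eval ((M * i ⌈/⌉ c : ℕ) : ℚ)) := by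
  have hcount : ∀ b ∈ range M, (b : ℚ) ^ n * ((c * b / M : ℕ) + 1) =
      ∑ i ∈ range c, if M * i ≤ c * b then (b : ℚ) ^ n else 0 := by
    intro b hb
    rw [← sum_filter, sum_const, card_filter_mul_le hc (mem_range.1 hb), nsmul_eq_mul]
    push_cast
    ring
  rw [sum_congr rfl hcount, sum_comm]
  refine sum_congr rfl fun i hi => ?_
  have hfilter : {b ∈ range M | M * i ≤ c * b} = Ico (M * i ⌈/⌉ c) M := by
    ext b
    simp only [mem_filter, mem_range, mem_Ico, ceilDiv_le_iff_le_mul hc]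
    tauto
  have hle : M * i ⌈/⌉ c ≤ M := by
    rw [ceilDiv_le_iff_le_mul hc, mul_comm c]
    exact Nat.mul_le_mul_left M (mem_range.1 hi).le
  rw [← sum_filter, hfilter, sum_Ico_eq_sub _ hle, faulhaber_eval_natCast, faulhaber_eval_natCast]

theorem exists_mazurRatSum_eq_add (c n M : ℕ) : ∃ E : ℤ,
    mazurRatSum c n M =
      ∑ b ∈ range M, ((c * b : ℕ) : ℚ) ^ n * (((c : ℚ) - 1) / 2 - (c * b / M : ℕ)) + E * M / 2 := by
  have hdvd : ∀ b, (M : ℤ) ∣ (((c * b % M) ^ n : ℕ) : ℤ) - (((c * b) ^ n : ℕ) : ℤ) := fun b =>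
    Nat.modEq_iff_dvd.1 ((Nat.mod_modEq (c * b) M).symm.pow n)
  choose z hz using hdvd
  refine ⟨∑ b ∈ range M, z b * (c - 1 - 2 * (c * b / M : ℕ)), ?_⟩
  rw [mazurRatSum, ← sub_eq_iff_eq_add', ← sum_sub_distrib]
  rw [Int.cast_sum, sum_mul, sum_div]
  refine sum_congr rfl fun b _ => ?_
  have hzb : ((c * b % M : ℕ) : ℚ) ^ n - ((c * b : ℕ) : ℚ) ^ n = M * z b := by
    exact_mod_cast hz b
  simp only [Int.cast_mul, Int.cast_sub, Int.cast_natCast, Int.cast_one, Int.cast_ofNat]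
  linear_combination (((c : ℚ) - 1) / 2 - (c * b / M : ℕ)) * hzb

theorem exists_mazurRatSum_eq {c M : ℕ} (hc : 0 < c) (n : ℕ) : ∃ E : ℤ,
    mazurRatSum c n M = c ^ n * (∑ i ∈ range c, (faulhaber n).eval ((M * i ⌈/⌉ c : ℕ) : ℚ) -
      ((c : ℚ) - 1) / 2 * (faulhaber n).eval (M : ℚ)) + E * M / 2 := by
  obtain ⟨E, hE⟩ := exists_mazurRatSum_eq_add c n M
  refine ⟨E, hE.trans (congrArg (· + _) ?_)⟩
  have h := sum_pow_mul_div_add_one (M := M) hc n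
  rw [sum_sub_distrib, sum_const, card_range, nsmul_eq_mul] at h
  calc ∑ b ∈ range M, ((c * b : ℕ) : ℚ) ^ n * (((c : ℚ) - 1) / 2 - (c * b / M : ℕ))
      = c ^ n * ((c + 1) / 2 * ∑ b ∈ range M, (b : ℚ) ^ n -
          ∑ b ∈ range M, (b : ℚ) ^ n * ((c * b / M : ℕ) + 1)) := by
        rw [mul_sum, mul_sub, mul_sum, mul_sum, ← sum_sub_distrib]
        refine sum_congr rfl fun b _ => ?_
        push_cast
        ring
    _ = _ := by
        rw [h, ← faulhaber_eval_natCast]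
        ring

theorem exists_mazurRatSum_sub_eq {c M : ℕ} (hc : 0 < c) (hM : M.Coprime c) (n : ℕ) : ∃ E : ℤ,
    mazurRatSum c n M - (1 - (c : ℚ) ^ (n + 1)) * _root_.bernoulli (n + 1) / (n + 1) =
      c ^ n * ∑ i ∈ range c, ((faulhaber n).eval ((M * i ⌈/⌉ c : ℕ) : ℚ) -
        (faulhaber n).eval (((c - 1) * M * i % c : ℕ) / (c : ℚ))) -
      c ^ n * (((c : ℚ) - 1) / 2) * (faulhaber n).eval (M : ℚ) + E * M / 2 := by
  obtain ⟨E, hE⟩ := exists_mazurRatSum_eq (M := M) hc n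
  have hcop : ((c - 1) * M).Coprime c :=
    Nat.Coprime.mul_left ((Nat.coprime_self_sub_left hc).2 (Nat.coprime_one_left c)) hM
  refine ⟨E, ?_⟩
  rw [hE, ← faulhaber_sum_eval_div hc.ne',
    ← sum_range_comp_mul_mod hcop fun r => (faulhaber n).eval ((r : ℚ) / c), sum_sub_distrib]
  ring

theorem norm_pow_sub_pow_le {R : Type*} [NormedCommRing R] [NormOneClass R] {x y : R}
    (hx : ‖x‖ ≤ 1) (hy : ‖y‖ ≤ 1) (i : ℕ) : ‖x ^ i - y ^ i‖ ≤ i * ‖x - y‖ := by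
  induction i with
  | zero => simp
  | succ i ih =>
    have hyi : ‖y ^ i‖ ≤ 1 := (norm_pow_le y i).trans (pow_le_one₀ (norm_nonneg y) hy)
    calc ‖x ^ (i + 1) - y ^ (i + 1)‖ = ‖x * (x ^ i - y ^ i) + (x - y) * y ^ i‖ := by ring_nf
      _ ≤ ‖x‖ * ‖x ^ i - y ^ i‖ + ‖x - y‖ * ‖y ^ i‖ :=
        (norm_add_le _ _).trans (add_le_add (norm_mul_le _ _) (norm_mul_le _ _))
      _ ≤ 1 * (i * ‖x - y‖) + ‖x - y‖ * 1 := by gcongr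
      _ = (i + 1 : ℕ) * ‖x - y‖ := by push_cast; ring

theorem Polynomial.exists_norm_aeval_sub_aeval_le {R A : Type*} [CommSemiring R] [NormedCommRing A]
    [NormOneClass A] [Algebra R A] (P : R[X]) :
    ∃ L : ℝ, 0 ≤ L ∧ ∀ x y : A, ‖x‖ ≤ 1 → ‖y‖ ≤ 1 → ‖aeval x P - aeval y P‖ ≤ L * ‖x - y‖ := by
  induction P using Polynomial.induction_on' with
  | add P Q hP hQ =>
    obtain ⟨L, hL0, hL⟩ := hP
    obtain ⟨L', hL'0, hL'⟩ := hQ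
    refine ⟨L + L', add_nonneg hL0 hL'0, fun x y hx hy => ?_⟩
    rw [map_add, map_add, add_sub_add_comm, add_mul]
    exact (norm_add_le _ _).trans (add_le_add (hL x y hx hy) (hL' x y hx hy))
  | monomial i a =>
    refine ⟨‖algebraMap R A a‖ * i, by positivity, fun x y hx hy => ?_⟩
    rw [aeval_monomial, aeval_monomial, ← mul_sub, mul_assoc]
    exact (norm_mul_le _ _).trans
      (mul_le_mul_of_nonneg_left (norm_pow_sub_pow_le hx hy i) (norm_nonneg _))

theorem norm_ceilDiv_sub_mod_div_le {K : Type*} [NormedField K] [IsUltrametricDist K] {c : ℕ}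
    (hc : ‖(c : K)‖ = 1) (M i : ℕ) :
    ‖((M * i ⌈/⌉ c : ℕ) : K) - ((c - 1) * M * i % c : ℕ) / (c : K)‖ ≤ ‖(M : K)‖ := by
  have hc0 : (c : K) ≠ 0 := by rw [← norm_ne_zero_iff, hc]; exact one_ne_zero
  have hceil := Nat.mul_ceilDiv_eq_add_mod (c := c)
    (Nat.pos_of_ne_zero (by rintro rfl; simp at hc0)) (M * i)
  rw [← mul_assoc] at hceil
  have hceilK := congrArg (Nat.cast : ℕ → K) hceil
  push_cast at hceilK
  have hdiff : ((M * i ⌈/⌉ c : ℕ) : K) - ((c - 1) * M * i % c : ℕ) / (c : K) = M * i / c := by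
    field_simp
    linear_combination hceilK
  rw [hdiff, norm_div, norm_mul, hc, div_one]
  exact mul_le_of_le_one_right (norm_nonneg _) (IsUltrametricDist.norm_natCast_le_one K i)

theorem Polynomial.ratCast_eval {K : Type*} [Field K] [CharZero K] (P : ℚ[X]) (q : ℚ) :
    ((P.eval q : ℚ) : K) = aeval (q : K) P := by
  simpa using (aeval_algebraMap_apply_eq_algebraMap_eval (A := K) q P).symm

open Filter Topology Asymptotics in
theorem tendsto_mazurRatSum {p c : ℕ} [Fact p.Prime] (hcp : c.Coprime p) (n : ℕ) :
    Tendsto (fun N => (mazurRatSum c n (p ^ N) : ℚ_[p])) atTop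
      (𝓝 (((1 - (c : ℚ) ^ (n + 1)) * _root_.bernoulli (n + 1) / ((n : ℚ) + 1) : ℚ) : ℚ_[p])) := by
  have hc : 0 < c := hcp.pos_of_ne_one (Fact.out : p.Prime).ne_one
  have hcnorm : ‖(c : ℚ_[p])‖ = 1 := Padic.norm_natCast_eq_one_iff.2 hcp.symm
  obtain ⟨L, hL0, hL⟩ := (faulhaber n).exists_norm_aeval_sub_aeval_le (A := ℚ_[p])
  choose E hE using fun N => exists_mazurRatSum_sub_eq hc (hcp.pow_right N).symm n
  rw [← tendsto_sub_nhds_zero_iff]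
  refine IsBigO.trans_tendsto (g'' := fun N => (p : ℚ_[p]) ^ N) ?_
    (tendsto_pow_atTop_nhds_zero_of_norm_lt_one Padic.norm_p_lt_one)
  have key := fun N => congrArg (Rat.cast : ℚ → ℚ_[p]) (hE N)
  push_cast [ratCast_eval] at key ⊢
  simp_rw [key]
  have hnat : ∀ m : ℕ, ‖(m : ℚ_[p])‖ ≤ 1 := IsUltrametricDist.norm_natCast_le_one ℚ_[p]
  have hpN : ∀ N, ‖(p : ℚ_[p]) ^ N‖ ≤ 1 := fun N => by exact_mod_cast hnat (p ^ N)
  have h1 : (fun N => ∑ i ∈ range c, (aeval ((p ^ N * i ⌈/⌉ c : ℕ) : ℚ_[p]) (faulhaber n) -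
      aeval (((c - 1) * p ^ N * i % c : ℕ) / (c : ℚ_[p])) (faulhaber n))) =O[atTop]
      fun N => (p : ℚ_[p]) ^ N := by
    refine isBigO_of_le' (c := c * L) _ fun N => (norm_sum_le _ _).trans ?_
    refine (sum_le_card_nsmul _ _ (L * ‖(p : ℚ_[p]) ^ N‖) fun i _ => ?_).trans_eq
      (by rw [card_range, nsmul_eq_mul, mul_assoc])
    refine (hL _ _ (hnat _) ?_).trans ?_
    · rw [norm_div, hcnorm, div_one]; exact hnat _
    · exact mul_le_mul_of_nonneg_left (by exact_mod_cast norm_ceilDiv_sub_mod_div_le hcnorm _ i) hL0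
  have hS0 : aeval (0 : ℚ_[p]) (faulhaber n) = 0 := by
    simpa [faulhaber_eval_zero] using (ratCast_eval (K := ℚ_[p]) (faulhaber n) 0).symm
  have h2 : (fun N => aeval ((p : ℚ_[p]) ^ N) (faulhaber n)) =O[atTop] fun N => (p : ℚ_[p]) ^ N :=
    isBigO_of_le' (c := L) _ fun N => by simpa [hS0] using hL _ 0 (hpN N) (by simp)
  have h3 : (fun N => (E N : ℚ_[p]) * p ^ N / 2) =O[atTop] fun N => (p : ℚ_[p]) ^ N :=
    isBigO_of_le' (c := ‖(2 : ℚ_[p])‖⁻¹) _ fun N => by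
      rw [norm_div, norm_mul, div_eq_inv_mul]
      exact mul_le_mul_of_nonneg_left (mul_le_of_le_one_left (norm_nonneg _)
        (Padic.norm_int_le_one _)) (by positivity)
  exact ((h1.const_mul_left _).sub (h2.const_mul_left _)).add h3

end

theorem mazurRiemannSum_rat_tendsto_general (p : ℕ) [Fact p.Prime] (c : ℕ)
    (hcp : Nat.Coprime c p) (n : ℕ) :
    (∃ q : ℕ → ℚ, ∀ N, 1 ≤ N → ((q N : ℂ) = mazurRiemannSum p c n N)) ∧
    ∀ q : ℕ → ℚ, (∀ N, 1 ≤ N → ((q N : ℂ) = mazurRiemannSum p c n N)) →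
      Filter.Tendsto (fun N => ((q N : ℚ_[p]))) Filter.atTop
        (nhds (((1 - (c : ℚ) ^ (n + 1)) * bernoulli (n + 1) / ((n : ℚ) + 1) : ℚ) : ℚ_[p])) := by
  have hs N : mazurRiemannSum p c n N = mazurRatSum c n (p ^ N) :=
    mazurRiemannSum_eq_mazurRatSum n N (hcp.pos_of_ne_one (Fact.out : p.Prime).ne_one) hcp
  refine ⟨⟨fun N => mazurRatSum c n (p ^ N), fun N _ => (hs N).symm⟩, fun q hq => ?_⟩
  refine (tendsto_mazurRatSum hcp n).congr' ?_
  filter_upwards [Filter.eventually_ge_atTop 1] with N hN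
  exact_mod_cast ((hq N hN).trans (hs N)).symm

/-- The Riemann sums `s_N` are rational, and in `ℚ_p` they converge to
`(1 − c^{n+1})·B_{n+1}/(n+1)`. -/
theorem mazurRiemannSum_rat_tendsto (p : ℕ) [Fact p.Prime] (c : ℕ) (hc : 2 ≤ c)
    (hcp : Nat.Coprime c p) (n : ℕ) :
    (∃ q : ℕ → ℚ, ∀ N, 1 ≤ N → ((q N : ℂ) = mazurRiemannSum p c n N)) ∧
    ∀ q : ℕ → ℚ, (∀ N, 1 ≤ N → ((q N : ℂ) = mazurRiemannSum p c n N)) →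
      Filter.Tendsto (fun N => ((q N : ℚ_[p]))) Filter.atTop
        (nhds (((1 - (c : ℚ) ^ (n + 1)) * bernoulli (n + 1) / ((n : ℚ) + 1) : ℚ) : ℚ_[p])) :=
  mazurRiemannSum_rat_tendsto_general p c hcp n
end

section
/- Let p be a prime, let c ∈ ℕ with c ≥ 2 and gcd(c,p) = 1, let N ∈ ℕ with N ≥ 1, and let j ∈ ℕ₀. Then in ℂ: Σ_{ξ ∈ μ_c, ξ ≠ 1} ξ^{pj}/(1 − ξ^{p^N}) = Σ_{ξ ∈ μ_c, ξ ≠ 1} ξ^{j}/(1 − ξ^{p^{N−1}}). (All denominators are nonzero since gcd(c,p) = 1.) -/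
open Polynomial

/-!
Since `p` is invertible modulo `c`, the map `ξ ↦ ξ ^ p` permutes the nontrivial `c`-th roots of
unity. Reindexing the right-hand side along it turns `ξ ^ j / (1 - ξ ^ p ^ (N - 1))` into
`ξ ^ (p * j) / (1 - ξ ^ p ^ N)`.
-/

theorem pow_pow_eq_self_of_mul_modEq_one {M : Type*} [Monoid M] {x : M} {n k d : ℕ}
    (hx : x ^ n = 1) (hkd : k * d ≡ 1 [MOD n]) : (x ^ k) ^ d = x := by
  rw [← pow_mul, pow_eq_pow_of_modEq hkd hx, pow_one]

section RootsOfUnity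

variable {R : Type*} [CommRing R] [IsDomain R] [DecidableEq R]

theorem pow_mem_nthRootsFinset_erase_one {n k d : ℕ}
    (hkd : k * d ≡ 1 [MOD n]) {ξ : R} (hξ : ξ ∈ (nthRootsFinset n (1 : R)).erase 1) :
    ξ ^ k ∈ (nthRootsFinset n (1 : R)).erase 1 := by
  obtain ⟨hξ1, hξn⟩ := Finset.mem_erase.1 hξ
  have hn : 0 < n := Nat.pos_of_ne_zero fun h => by simp [h, nthRootsFinset_zero] at hξn
  have hξ_pow : ξ ^ n = 1 := (mem_nthRootsFinset hn 1).1 hξn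
  refine Finset.mem_erase.2 ⟨fun h => hξ1 ?_, (mem_nthRootsFinset hn 1).2 ?_⟩
  · rw [← pow_pow_eq_self_of_mul_modEq_one hξ_pow hkd, h, one_pow]
  · rw [← pow_mul, mul_comm, pow_mul, hξ_pow, one_pow]

theorem sum_nthRootsFinset_erase_one_comp_pow {M : Type*} [AddCommMonoid M] {n k : ℕ}
    (hnk : n.Coprime k) (f : R → M) :
    ∑ ξ ∈ (nthRootsFinset n (1 : R)).erase 1, f (ξ ^ k) =
      ∑ ξ ∈ (nthRootsFinset n (1 : R)).erase 1, f ξ := by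
  rcases eq_or_ne n 0 with rfl | hn
  · simp [nthRootsFinset_zero]
  obtain ⟨d, -, hkd⟩ := Nat.exists_mul_mod_eq_of_coprime 1 hnk.symm hn
  have hdk : d * k ≡ 1 [MOD n] := by rwa [mul_comm]
  have hroot {ξ : R} (hξ : ξ ∈ (nthRootsFinset n (1 : R)).erase 1) : ξ ^ n = 1 :=
    (mem_nthRootsFinset (Nat.pos_of_ne_zero hn) 1).1 (Finset.mem_of_mem_erase hξ)
  exact Finset.sum_nbij' (· ^ k) (· ^ d)
    (fun _ hξ => pow_mem_nthRootsFinset_erase_one hkd hξ)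
    (fun _ hξ => pow_mem_nthRootsFinset_erase_one hdk hξ)
    (fun _ hξ => pow_pow_eq_self_of_mul_modEq_one (hroot hξ) hkd)
    (fun _ hξ => pow_pow_eq_self_of_mul_modEq_one (hroot hξ) hdk)
    (fun _ _ => rfl)

end RootsOfUnity

theorem mazur_measure_compatibility_general (p : ℕ) (c : ℕ)
    (hcp : Nat.Coprime c p) (N : ℕ) (hN : 1 ≤ N) (j : ℕ) :
    ∑ ξ ∈ (Polynomial.nthRootsFinset c (1 : ℂ)).erase 1, ξ ^ (p * j) / (1 - ξ ^ (p ^ N))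
      = ∑ ξ ∈ (Polynomial.nthRootsFinset c (1 : ℂ)).erase 1, ξ ^ j / (1 - ξ ^ (p ^ (N - 1))) := by
  refine Eq.trans ?_
    (sum_nthRootsFinset_erase_one_comp_pow hcp fun ζ : ℂ => ζ ^ j / (1 - ζ ^ p ^ (N - 1)))
  refine Finset.sum_congr rfl fun ξ _ => ?_
  rw [← pow_mul, ← pow_mul, ← pow_succ', Nat.sub_add_cancel hN]

/-- Compatibility of the Mazur measure:
`μ̃_c(pj + p^N ℤ_p) = μ̃_c(j + p^{N−1} ℤ_p)`, i.e.
`Σ_{ξ ∈ μ_c, ξ≠1} ξ^{pj}/(1 − ξ^{p^N}) = Σ_{ξ ∈ μ_c, ξ≠1} ξ^{j}/(1 − ξ^{p^{N−1}})` in `ℂ`. -/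
theorem mazur_measure_compatibility (p : ℕ) (hp : p.Prime) (c : ℕ) (hc : 2 ≤ c)
    (hcp : Nat.Coprime c p) (N : ℕ) (hN : 1 ≤ N) (j : ℕ) :
    ∑ ξ ∈ (Polynomial.nthRootsFinset c (1 : ℂ)).erase 1, ξ ^ (p * j) / (1 - ξ ^ (p ^ N))
      = ∑ ξ ∈ (Polynomial.nthRootsFinset c (1 : ℂ)).erase 1, ξ ^ j / (1 - ξ ^ (p ^ (N - 1))) :=
  mazur_measure_compatibility_general p c hcp N hN j
end

section
/- Let p be a prime, r ≥ 1, and let M, d be positive real numbers with d < p^{−1/(p−1)}. Let a : (Fin r → ℕ) → ℤ_p satisfy ‖a(n)‖_p ≤ M·d^{n_1+⋯+n_r} for every n = (n_1,…,n_r). Then there exists C : (Fin r → ℕ) → ℚ_p with ‖C(n)‖_p ≤ M·(d·p^{1/(p−1)})^{n_1+⋯+n_r} for every n, such that for every x = (x_1,…,x_r) ∈ ℚ_p^r with ‖x_j‖_p < d^{−1}·p^{−1/(p−1)} for all j, both families ( a(n)·∏_{j=1}^r b(x_j, n_j) )_{n ∈ ℕ^r} and ( C(n)·∏_{j=1}^r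 x_j^{n_j} )_{n ∈ ℕ^r} are summable in ℚ_p and have the same sum. -/
/-!
Write `b(x, m) = ∑_{k ≤ m} c(m, k) x^k`. The numerator `x (x - 1) ⋯ (x - m + 1)` has integer
coefficients and Legendre's formula gives `‖1 / m!‖ ≤ p^{m/(p-1)}`, so `‖c(m, k)‖ ≤ p^{m/(p-1)}`.
Hence the double family `a(n) ∏ⱼ c(nⱼ, kⱼ) xⱼ^{kⱼ}` vanishes unless `k ≤ n` and is bounded by
`M (d p^{1/(p-1)} max(1, ‖x‖))^{|n|}`. It therefore tends to zero along the cofinite filter, which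
in the complete ultrametric field `ℚ_p` makes it summable. Summing first over `k` gives the
binomial series, first over `n` the power series with `C(k) = ∑ₙ a(n) ∏ⱼ c(nⱼ, kⱼ)`.
-/

/-- The binomial polynomial `x choose m`, i.e. `(∏_{i=0}^{m−1} (x − i))/m!`. -/
noncomputable def padicBinom (p : ℕ) [Fact p.Prime] (x : ℚ_[p]) (m : ℕ) : ℚ_[p] :=
  (∏ i ∈ Finset.range m, (x - (i : ℚ_[p]))) / (Nat.factorial m : ℚ_[p])

open Filter Finset Polynomial
open scoped Nat

noncomputable def padicBinomCoeff (p : ℕ) [Fact p.Prime] (m k : ℕ) : ℚ_[p] :=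
  ((descPochhammer ℤ m).coeff k : ℚ_[p]) / (m ! : ℚ_[p])

variable {p : ℕ} [Fact p.Prime]

lemma padicBinom_eq_sum_range (x : ℚ_[p]) (m : ℕ) :
    padicBinom p x m = ∑ k ∈ range (m + 1), padicBinomCoeff p m k * x ^ k := by
  have hdeg : (descPochhammer ℤ m).natDegree < m + 1 := by
    rw [descPochhammer_natDegree]; exact m.lt_succ_self
  rw [padicBinom, ← descPochhammer_eval_eq_prod_range, ← descPochhammer_map (Int.castRingHom _),
    eval_map, eval₂_eq_sum_range' _ hdeg, sum_div]
  refine sum_congr rfl fun k _ => ?_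
  rw [padicBinomCoeff, div_mul_eq_mul_div, eq_intCast]

lemma padicBinomCoeff_eq_zero_of_lt {m k : ℕ} (h : m < k) : padicBinomCoeff p m k = 0 := by
  rw [padicBinomCoeff, coeff_eq_zero_of_natDegree_lt ((descPochhammer_natDegree ℤ m).trans_lt h),
    Int.cast_zero, zero_div]

lemma inv_norm_factorial_le (m : ℕ) :
    ‖(m ! : ℚ_[p])‖⁻¹ ≤ ((p : ℝ) ^ ((1 : ℝ) / ((p : ℝ) - 1))) ^ m := by
  have hp : 1 < (p : ℝ) := by exact_mod_cast (Fact.out : p.Prime).one_lt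
  set v := padicValNat p m !
  have hv : ((p : ℝ) - 1) * v ≤ m := by
    have h := sub_one_mul_padicValNat_factorial (p := p) m
    have h' : (p - 1) * v ≤ m := h ▸ Nat.sub_le _ _
    rw [← Nat.cast_one, ← Nat.cast_sub (Fact.out : p.Prime).one_le, ← Nat.cast_mul]
    exact_mod_cast h'
  have hnorm : ‖(m ! : ℚ_[p])‖⁻¹ = (p : ℝ) ^ (v : ℝ) := by
    rw [Padic.norm_eq_zpow_neg_valuation (by exact_mod_cast m.factorial_ne_zero),
      Padic.valuation_natCast, zpow_neg, inv_inv, zpow_natCast, Real.rpow_natCast]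
  rw [hnorm, ← Real.rpow_mul_natCast (by positivity)]
  refine Real.rpow_le_rpow_of_exponent_le hp.le ?_
  rw [one_div_mul_eq_div, le_div_iff₀ (by linarith), mul_comm]
  exact hv

lemma norm_padicBinomCoeff_le (m k : ℕ) :
    ‖padicBinomCoeff p m k‖ ≤ ((p : ℝ) ^ ((1 : ℝ) / ((p : ℝ) - 1))) ^ m := by
  rw [padicBinomCoeff, norm_div, div_eq_mul_inv]
  exact (mul_le_of_le_one_left (inv_nonneg.2 (norm_nonneg _)) (Padic.norm_int_le_one _)).trans
    (inv_norm_factorial_le m)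

section MultiIndex

variable {ι : Type*} [Fintype ι]

lemma prod_padicBinomCoeff_eq_zero {n k : ι → ℕ} (h : ¬k ≤ n) :
    ∏ j, padicBinomCoeff p (n j) (k j) = 0 := by
  obtain ⟨j, hj⟩ : ∃ j, n j < k j := by simpa [Pi.le_def] using h
  exact prod_eq_zero (mem_univ j) (padicBinomCoeff_eq_zero_of_lt hj)

lemma hasSum_prod_padicBinom (x : ι → ℚ_[p]) (n : ι → ℕ) :
    HasSum (fun k : ι → ℕ => ∏ j, padicBinomCoeff p (n j) (k j) * x j ^ k j)
      (∏ j, padicBinom p (x j) (n j)) := by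
  classical
  simp_rw [padicBinom_eq_sum_range, prod_univ_sum]
  refine hasSum_sum_of_ne_finset_zero fun k hk => ?_
  obtain ⟨j, hj⟩ : ∃ j, n j < k j := by simpa [Fintype.mem_piFinset, Nat.lt_succ_iff] using hk
  exact prod_eq_zero (mem_univ j) (by rw [padicBinomCoeff_eq_zero_of_lt hj, zero_mul])

lemma finite_setOf_sum_le (N : ℕ) : {n : ι → ℕ | ∑ j, n j ≤ N}.Finite :=
  (Set.Finite.pi' fun _ => Set.finite_Iic N).subset fun n hn j =>
    (single_le_sum (fun i _ => Nat.zero_le (n i)) (mem_univ j)).trans hn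

lemma summable_of_norm_le_geometric_of_le {E : Type*} [NormedAddCommGroup E] [IsUltrametricDist E]
    [CompleteSpace E] {F : (ι → ℕ) × (ι → ℕ) → E} {M U : ℝ} (hU0 : 0 ≤ U) (hU1 : U < 1)
    (hF : ∀ n k, k ≤ n → ‖F (n, k)‖ ≤ M * U ^ ∑ j, n j) (hF0 : ∀ n k, ¬k ≤ n → F (n, k) = 0) :
    Summable F := by
  refine NonarchimedeanAddGroup.summable_of_tendsto_cofinite_zero ?_
  rw [Metric.tendsto_nhds]
  intro ε hε
  rw [eventually_cofinite]
  obtain ⟨N, hN⟩ : ∃ N : ℕ, ∀ m ≥ N, M * U ^ m < ε := by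
    have h := (tendsto_pow_atTop_nhds_zero_of_lt_one hU0 hU1).const_mul M
    rw [mul_zero] at h
    exact (h.eventually (gt_mem_nhds hε)).exists_forall_of_atTop
  refine ((finite_setOf_sum_le N).prod (finite_setOf_sum_le N)).subset ?_
  rintro ⟨n, k⟩ hnk
  replace hnk : ε ≤ ‖F (n, k)‖ := by simpa using hnk
  have hkn : k ≤ n := by
    by_contra h
    rw [hF0 n k h, norm_zero] at hnk
    exact hε.not_ge hnk
  have hn : ∑ j, n j ≤ N := by
    by_contra h
    exact (hnk.trans (hF n k hkn)).not_gt (hN _ (le_of_not_ge h))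
  exact ⟨hn, (sum_le_sum fun j _ => hkn j).trans hn⟩

end MultiIndex

section PowerSeries

variable {ι : Type*} [Fintype ι] {a : (ι → ℕ) → ℚ_[p]} {M t : ℝ}

noncomputable def powerSeriesCoeff (a : (ι → ℕ) → ℚ_[p]) (k : ι → ℕ) : ℚ_[p] :=
  ∑' n, a n * ∏ j, padicBinomCoeff p (n j) (k j)

lemma norm_mul_prod_padicBinomCoeff_le {d : ℝ} (ha : ∀ n, ‖a n‖ ≤ M * d ^ ∑ j, n j)
    (n k : ι → ℕ) :
    ‖a n * ∏ j, padicBinomCoeff p (n j) (k j)‖ ≤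
      M * (d * (p : ℝ) ^ ((1 : ℝ) / ((p : ℝ) - 1))) ^ ∑ j, n j := by
  have hc : ∏ j, ‖padicBinomCoeff p (n j) (k j)‖ ≤
      ((p : ℝ) ^ ((1 : ℝ) / ((p : ℝ) - 1))) ^ ∑ j, n j := by
    rw [← prod_pow_eq_pow_sum]
    exact prod_le_prod (fun j _ => norm_nonneg _) fun j _ => norm_padicBinomCoeff_le _ _
  rw [norm_mul, norm_prod, mul_pow, ← mul_assoc]
  exact mul_le_mul (ha n) hc (prod_nonneg fun j _ => norm_nonneg _) ((norm_nonneg _).trans (ha n))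

lemma norm_powerSeriesCoeff_le (ht0 : 0 ≤ t) (ht1 : t ≤ 1)
    (hg : ∀ n k : ι → ℕ, ‖a n * ∏ j, padicBinomCoeff p (n j) (k j)‖ ≤ M * t ^ ∑ j, n j) (k : ι → ℕ) :
    ‖powerSeriesCoeff a k‖ ≤ M * t ^ ∑ j, k j := by
  have hM : 0 ≤ M := by simpa using (norm_nonneg _).trans (hg 0 0)
  refine IsUltrametricDist.norm_tsum_le_of_forall_le_of_nonneg (by positivity) fun n => ?_
  by_cases hkn : k ≤ n
  · exact (hg n k).trans <| mul_le_mul_of_nonneg_left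
      (pow_le_pow_of_le_one ht0 ht1 (sum_le_sum fun j _ => hkn j)) hM
  · rw [prod_padicBinomCoeff_eq_zero hkn, mul_zero, norm_zero]
    positivity

theorem exists_hasSum_binomialSeries_powerSeries (ht0 : 0 < t) (ht1 : t < 1)
    (hg : ∀ n k : ι → ℕ, ‖a n * ∏ j, padicBinomCoeff p (n j) (k j)‖ ≤ M * t ^ ∑ j, n j)
    {x : ι → ℚ_[p]} (hx : ∀ j, ‖x j‖ < t⁻¹) :
    ∃ S, HasSum (fun n => a n * ∏ j, padicBinom p (x j) (n j)) S ∧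
      HasSum (fun k => powerSeriesCoeff a k * ∏ j, x j ^ k j) S := by
  set F : (ι → ℕ) × (ι → ℕ) → ℚ_[p] := fun nk =>
    (a nk.1 * ∏ j, padicBinomCoeff p (nk.1 j) (nk.2 j)) * ∏ j, x j ^ nk.2 j
  obtain ⟨R, hR1, hxR, htR⟩ : ∃ R, 1 ≤ R ∧ (∀ j, ‖x j‖ ≤ R) ∧ t * R < 1 := by
    refine ⟨univ.fold max 1 (‖x ·‖), (le_fold_max 1).2 (Or.inl le_rfl),
      fun j => (le_fold_max _).2 (Or.inr ⟨j, mem_univ j, le_rfl⟩), ?_⟩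
    calc t * univ.fold max 1 (‖x ·‖) < t * t⁻¹ := by
          gcongr
          exact (fold_max_lt _).2 ⟨(one_lt_inv₀ ht0).2 ht1, fun j _ => hx j⟩
      _ = 1 := mul_inv_cancel₀ ht0.ne'
  have hF_le : ∀ n k, k ≤ n → ‖F (n, k)‖ ≤ M * (t * R) ^ ∑ j, n j := by
    intro n k hkn
    have hxk : ∏ j, ‖x j‖ ^ k j ≤ R ^ ∑ j, n j := by
      rw [← prod_pow_eq_pow_sum]
      exact prod_le_prod (fun j _ => by positivity) fun j _ =>
        (pow_le_pow_left₀ (norm_nonneg _) (hxR j) _).trans (pow_le_pow_right₀ hR1 (hkn j))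
    calc ‖F (n, k)‖ = ‖a n * ∏ j, padicBinomCoeff p (n j) (k j)‖ * ∏ j, ‖x j‖ ^ k j := by
          simp only [F, norm_mul, norm_prod, norm_pow]
      _ ≤ M * t ^ (∑ j, n j) * R ^ (∑ j, n j) :=
          mul_le_mul (hg n k) hxk (by positivity) ((norm_nonneg _).trans (hg n k))
      _ = M * (t * R) ^ ∑ j, n j := by rw [mul_pow, mul_assoc]
  have hF : Summable F := summable_of_norm_le_geometric_of_le (by positivity) htR hF_le
    fun n k hkn => by simp only [F, prod_padicBinomCoeff_eq_zero hkn, mul_zero, zero_mul]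
  refine ⟨∑' nk, F nk, hF.hasSum.prod_fiberwise fun n => ?_, ?_⟩
  · simpa only [F, mul_assoc, ← prod_mul_distrib] using (hasSum_prod_padicBinom x n).mul_left (a n)
  · have hswap := (Equiv.prodComm _ _).hasSum_iff.mpr hF.hasSum
    refine hswap.prod_fiberwise fun k => ?_
    simpa only [F, Function.comp_apply, Equiv.prodComm_apply, Prod.swap_prod_mk, powerSeriesCoeff,
      tsum_mul_right] using (hswap.summable.prod_factor k).hasSum

end PowerSeries

theorem binomial_series_to_power_series_general (p : ℕ) [Fact p.Prime] (r : ℕ)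
    (M d : ℝ) (hd : 0 < d)
    (hdp : d < (p : ℝ) ^ (-1 / ((p : ℝ) - 1)))
    (a : (Fin r → ℕ) → ℤ_[p])
    (ha : ∀ n : Fin r → ℕ, ‖a n‖ ≤ M * d ^ (∑ j, n j)) :
    ∃ C : (Fin r → ℕ) → ℚ_[p],
      (∀ n : Fin r → ℕ,
        ‖C n‖ ≤ M * (d * (p : ℝ) ^ ((1 : ℝ) / ((p : ℝ) - 1))) ^ (∑ j, n j)) ∧
      ∀ x : Fin r → ℚ_[p],
        (∀ j, ‖x j‖ < d⁻¹ * (p : ℝ) ^ (-1 / ((p : ℝ) - 1))) →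
          ∃ S : ℚ_[p],
            HasSum (fun n : Fin r → ℕ =>
              ((a n : ℚ_[p]) * ∏ j, padicBinom p (x j) (n j))) S ∧
            HasSum (fun n : Fin r → ℕ => C n * ∏ j, (x j) ^ (n j)) S := by
  have hp : 0 < (p : ℝ) := by exact_mod_cast (Fact.out : p.Prime).pos
  have hg := norm_mul_prod_padicBinomCoeff_le (a := fun n => (a n : ℚ_[p]))
    (by simpa only [PadicInt.padic_norm_e_of_padicInt] using ha)
  have hτ0 : 0 < (p : ℝ) ^ ((1 : ℝ) / ((p : ℝ) - 1)) := by positivity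
  rw [neg_div, Real.rpow_neg hp.le] at hdp ⊢
  generalize (p : ℝ) ^ ((1 : ℝ) / ((p : ℝ) - 1)) = τ at hτ0 hdp hg ⊢
  have ht0 : 0 < d * τ := by positivity
  have ht1 : d * τ < 1 := (mul_lt_mul_of_pos_right hdp hτ0).trans_eq (inv_mul_cancel₀ hτ0.ne')
  refine ⟨powerSeriesCoeff fun n => (a n : ℚ_[p]), norm_powerSeriesCoeff_le ht0.le ht1.le hg,
    fun x hx => exists_hasSum_binomialSeries_powerSeries ht0 ht1 hg fun j => ?_⟩
  simpa only [mul_inv] using hx j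

/-- A multivariable Mahler-type expansion: a function given by a binomial series with
`ℤ_p`-coefficients decaying like `M·d^{|n|}` (with `d < p^{−1/(p−1)}`) admits a power
series expansion with controlled coefficients on the polydisc of radius `d⁻¹·p^{−1/(p−1)}`. -/
theorem binomial_series_to_power_series (p : ℕ) [Fact p.Prime] (r : ℕ) (hr : 1 ≤ r)
    (M d : ℝ) (hM : 0 < M) (hd : 0 < d)
    (hdp : d < (p : ℝ) ^ (-1 / ((p : ℝ) - 1)))
    (a : (Fin r → ℕ) → ℤ_[p])
    (ha : ∀ n : Fin r → ℕ, ‖a n‖ ≤ M * d ^ (∑ j, n j)) :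
    ∃ C : (Fin r → ℕ) → ℚ_[p],
      (∀ n : Fin r → ℕ,
        ‖C n‖ ≤ M * (d * (p : ℝ) ^ ((1 : ℝ) / ((p : ℝ) - 1))) ^ (∑ j, n j)) ∧
      ∀ x : Fin r → ℚ_[p],
        (∀ j, ‖x j‖ < d⁻¹ * (p : ℝ) ^ (-1 / ((p : ℝ) - 1))) →
          ∃ S : ℚ_[p],
            HasSum (fun n : Fin r → ℕ =>
              ((a n : ℚ_[p]) * ∏ j, padicBinom p (x j) (n j))) S ∧
            HasSum (fun n : Fin r → ℕ => C n * ∏ j, (x j) ^ (n j)) S :=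
  binomial_series_to_power_series_general p r M d hd hdp a ha
end

section
/- Let p be a prime. For c ∈ ℤ_p define the power series (1+T)^c := Σ_{n≥0} b(c,n)·Tⁿ ∈ ℚ_p[[T]], where b(c,n) := (∏_{i=0}^{n−1}(c − i))/n! ∈ ℚ_p. Then: (1) for every c ∈ ℤ_p^× there exists a unique power series g_c ∈ ℤ_p[[T]] whose image in ℚ_p[[T]] satisfies T·((1+T)^c − 1)·g_c = ((1+T)^c − 1) − c·T (so that g_c represents 1/((1+T)−1) − c/((1+T)^c − 1)); and (2) the map ℤ_p^× → ℤ_p[[T]], c ↦ g_c, is continuous, where ℤ_p[[T]] carries the product topology of coefficientwise convergence. -/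
/-- The power series `(1+T)^c = Σ_{n≥0} (c choose n) Tⁿ ∈ ℚ_p[[T]]` for `c ∈ ℤ_p`
(here given for any `c ∈ ℚ_p`), where `(c choose n) = (∏_{i=0}^{n−1}(c − i))/n!`. -/
noncomputable def onePlusTPow (p : ℕ) [Fact p.Prime] (c : ℚ_[p]) : PowerSeries ℚ_[p] :=
  PowerSeries.mk fun n => (∏ i ∈ Finset.range n, (c - (i : ℚ_[p]))) / (Nat.factorial n : ℚ_[p])

/-!
Since `(1+T)^c` has constant term `1` and linear coefficient `c`, one can write
`(1+T)^c - 1 = T h` and `h = c + T k` over `ℤ_p`. For `c` a unit, `h` is invertible in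
`ℤ_p[[T]]` and `g_c = k h⁻¹` solves the equation; it is the only solution because
`ℚ_p[[T]]` is a domain. The coefficients of `h⁻¹` satisfy the usual recursion, which is
polynomial in `c⁻¹` and the binomial coefficients `(c choose n)`, all continuous in `c`.
-/

open PowerSeries

namespace PowerSeries

section Algebra

variable {R S : Type*} [CommRing R] [CommRing S]

noncomputable def divX (φ : R⟦X⟧) : R⟦X⟧ :=
  mk fun n => coeff (n + 1) φ

@[simp]
lemma coeff_divX (φ : R⟦X⟧) (n : ℕ) : coeff n (divX φ) = coeff (n + 1) φ :=
  coeff_mk _ _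

lemma constantCoeff_divX (φ : R⟦X⟧) : constantCoeff (divX φ) = coeff 1 φ := by
  rw [← coeff_zero_eq_constantCoeff_apply, coeff_divX]

/-- The series `1/X - u/(φ - 1)`, computed as `k/h` where `φ - 1 = X h` and `h = u + X k`. -/
noncomputable def mazurSeries (φ : R⟦X⟧) (u : Rˣ) : R⟦X⟧ :=
  divX (divX φ) * invOfUnit (divX φ) u

lemma X_mul_sub_one_mul_mazurSeries {φ : R⟦X⟧} {u : Rˣ} (h0 : constantCoeff φ = 1)
    (h1 : coeff 1 φ = u) : X * (φ - 1) * mazurSeries φ u = (φ - 1) - C (u : R) * X := by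
  have hφ : φ - 1 = X * divX φ := by
    rw [← map_one C, ← h0]
    exact sub_const_eq_X_mul_shift φ
  have hh : divX φ - C (u : R) = X * divX (divX φ) := by
    rw [← h1, ← constantCoeff_divX]
    exact sub_const_eq_X_mul_shift (divX φ)
  have hinv : divX φ * invOfUnit (divX φ) u = 1 :=
    mul_invOfUnit _ _ (by rw [constantCoeff_divX, h1])
  calc X * (φ - 1) * mazurSeries φ u
      = X * X * divX (divX φ) * (divX φ * invOfUnit (divX φ) u) := by
        rw [hφ, mazurSeries]; ring
    _ = X * (divX φ - C (u : R)) := by rw [hinv, hh]; ring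
    _ = (φ - 1) - C (u : R) * X := by rw [hφ]; ring

lemma X_mul_map_sub_one_mul_map_mazurSeries (f : R →+* S) {φ : R⟦X⟧} {u : Rˣ}
    (h0 : constantCoeff φ = 1) (h1 : coeff 1 φ = u) :
    X * (map f φ - 1) * map f (mazurSeries φ u) = (map f φ - 1) - C (f u) * X := by
  simpa using congrArg (map f) (X_mul_sub_one_mul_mazurSeries h0 h1)

lemma existsUnique_X_mul_map_sub_one_mul_map_eq [IsDomain S] (f : R →+* S)
    (hf : Function.Injective f) {φ : R⟦X⟧} {u : Rˣ} (h0 : constantCoeff φ = 1)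
    (h1 : coeff 1 φ = u) :
    ∃! ψ : R⟦X⟧, X * (map f φ - 1) * map f ψ = (map f φ - 1) - C (f u) * X := by
  refine ⟨mazurSeries φ u, X_mul_map_sub_one_mul_map_mazurSeries f h0 h1, fun ψ hψ => ?_⟩
  have hne : X * (map f φ - 1) ≠ 0 := by
    refine mul_ne_zero X_ne_zero fun h => (u.map f.toMonoidHom).ne_zero ?_
    simpa [h1] using congrArg (coeff 1) h
  exact map_injective f hf <|
    mul_left_cancel₀ hne (hψ.trans (X_mul_map_sub_one_mul_map_mazurSeries f h0 h1).symm)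

end Algebra

section Continuity

variable {T R : Type*} [TopologicalSpace T] [CommRing R] [TopologicalSpace R]

lemma continuous_coeff_divX {φ : T → R⟦X⟧} (hφ : ∀ n, Continuous fun t => coeff n (φ t))
    (n : ℕ) : Continuous fun t => coeff n (divX (φ t)) := by
  simpa only [coeff_divX] using hφ (n + 1)

variable [IsTopologicalRing R]

lemma continuous_coeff_mul {φ ψ : T → R⟦X⟧} (hφ : ∀ n, Continuous fun t => coeff n (φ t))
    (hψ : ∀ n, Continuous fun t => coeff n (ψ t)) (n : ℕ) :
    Continuous fun t => coeff n (φ t * ψ t) := by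
  simp only [coeff_mul]
  exact continuous_finsetSum _ fun ij _ => (hφ ij.1).mul (hψ ij.2)

lemma continuous_coeff_invOfUnit {φ : T → R⟦X⟧} {u : T → Rˣ}
    (hφ : ∀ n, Continuous fun t => coeff n (φ t)) (hu : Continuous fun t => (↑(u t)⁻¹ : R))
    (n : ℕ) : Continuous fun t => coeff n (invOfUnit (φ t) (u t)) := by
  induction n using Nat.strong_induction_on with
  | _ n ih =>
    rw [funext fun t => coeff_invOfUnit n (φ t) (u t)]
    split_ifs
    · exact hu
    refine hu.neg.mul (continuous_finsetSum _ fun ij _ => ?_)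
    by_cases hlt : ij.2 < n
    · simp only [if_pos hlt]
      exact (hφ ij.1).mul (ih ij.2 hlt)
    · simp only [if_neg hlt]
      exact continuous_const

lemma continuous_coeff_mazurSeries {φ : T → R⟦X⟧} {u : T → Rˣ}
    (hφ : ∀ n, Continuous fun t => coeff n (φ t)) (hu : Continuous fun t => (↑(u t)⁻¹ : R))
    (n : ℕ) : Continuous fun t => coeff n (mazurSeries (φ t) (u t)) :=
  continuous_coeff_mul (continuous_coeff_divX (continuous_coeff_divX hφ))
    (continuous_coeff_invOfUnit (continuous_coeff_divX hφ) hu) n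

end Continuity

section Binomial

variable {R S : Type*} [CommRing R] [BinomialRing R] [CommRing S] [BinomialRing S]

lemma map_binomialSeries (f : R →+* S) (r : R) :
    map f (binomialSeries R r) = binomialSeries S (f r) := by
  ext n
  simp [Ring.map_choose]

lemma coeff_one_binomialSeries (r : R) : coeff 1 (binomialSeries R r) = r := by
  simp

end Binomial

end PowerSeries

lemma onePlusTPow_eq_binomialSeries {p : ℕ} [Fact p.Prime] (c : ℚ_[p]) :
    onePlusTPow p c = PowerSeries.binomialSeries ℚ_[p] c := by
  ext n
  rw [onePlusTPow, coeff_mk, binomialSeries_coeff, smul_eq_mul, mul_one, Ring.choose_eq_smul,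
    ← Polynomial.aeval_eq_smeval, Polynomial.aeval_def, ← Polynomial.eval_map,
    descPochhammer_map, descPochhammer_eval_eq_prod_range, smul_eq_mul, div_eq_inv_mul]

lemma continuous_coeff_binomialSeries_padicInt {p : ℕ} [Fact p.Prime] (n : ℕ) :
    Continuous fun c : ℤ_[p] => coeff n (binomialSeries ℤ_[p] c) := by
  simpa using PadicInt.continuous_choose n

/-- For every unit `c ∈ ℤ_p^×` there is a unique `g_c ∈ ℤ_p[[T]]` representing
`1/((1+T)−1) − c/((1+T)^c − 1)` (in the sense that
`T·((1+T)^c − 1)·g_c = ((1+T)^c − 1) − c·T` in `ℚ_p[[T]]`), and `c ↦ g_c` is continuous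
for the topology of coefficientwise convergence on `ℤ_p[[T]]`. -/
theorem exists_unique_gc_and_continuous (p : ℕ) [Fact p.Prime] :
    (∀ c : ℤ_[p]ˣ, ∃! g : PowerSeries ℤ_[p],
        PowerSeries.X * (onePlusTPow p (((c : ℤ_[p]) : ℚ_[p])) - 1) *
            (PowerSeries.map (PadicInt.Coe.ringHom (p := p)) g)
          = (onePlusTPow p (((c : ℤ_[p]) : ℚ_[p])) - 1) -
              PowerSeries.C (((c : ℤ_[p]) : ℚ_[p])) * PowerSeries.X) ∧
    ∃ g : ℤ_[p]ˣ → PowerSeries ℤ_[p],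
      (∀ c : ℤ_[p]ˣ,
        PowerSeries.X * (onePlusTPow p (((c : ℤ_[p]) : ℚ_[p])) - 1) *
            (PowerSeries.map (PadicInt.Coe.ringHom (p := p)) (g c))
          = (onePlusTPow p (((c : ℤ_[p]) : ℚ_[p])) - 1) -
              PowerSeries.C (((c : ℤ_[p]) : ℚ_[p])) * PowerSeries.X) ∧
      ∀ n : ℕ, Continuous fun c : ℤ_[p]ˣ => PowerSeries.coeff n (g c) := by
  have hmap (c : ℤ_[p]) : onePlusTPow p (c : ℚ_[p])
      = map PadicInt.Coe.ringHom (binomialSeries ℤ_[p] c) := by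
    rw [onePlusTPow_eq_binomialSeries, map_binomialSeries]
    rfl
  have h0 (c : ℤ_[p]) := binomialSeries_constantCoeff (A := ℤ_[p]) c
  have h1 (c : ℤ_[p]) := coeff_one_binomialSeries c
  refine ⟨fun c => ?_, fun c => mazurSeries (binomialSeries ℤ_[p] (c : ℤ_[p])) c,
    fun c => ?_, continuous_coeff_mazurSeries
      (fun n => (continuous_coeff_binomialSeries_padicInt n).comp Units.continuous_val)
      Units.continuous_coe_inv⟩
  · rw [hmap]
    exact existsUnique_X_mul_map_sub_one_mul_map_eq _ Subtype.coe_injective (h0 c) (h1 c)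
  · rw [hmap]
    exact X_mul_map_sub_one_mul_map_mazurSeries _ (h0 c) (h1 c)
end

section
/- (Double Kummer congruence.) Let p be a prime, let c ∈ ℕ with c ≥ 2 and gcd(c,p) = 1, let l_1, l_2 ∈ ℕ with l_j ≥ 1, and let m_1, m_2, n_1, n_2 ∈ ℕ₀ satisfy m_j ≡ n_j (mod (p−1)p^{l_j−1}) for j = 1, 2. For k_1, k_2 ∈ ℕ₀ define the rational number A(k_1,k_2) := Σ_{ν=0}^{k_2} C(k_2,ν)·(1 − p^{k_1+ν})·(1 − c^{k_1+ν+1})·(1 − c^{k_2−ν+1})·(B_{k_1+ν+1}·B_{k_2−ν+1})/((k_1+ν+1)(k_2−ν+1))·p^{k_2−ν}. Then there exists t ∈ ℚ whose denominator is coprime to p such that A(m_1,m_2) − A(n_1,n_2) = p^{min(l_1,l_2)}·t. -/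
/-!
For `c` prime to `p`, the sums `J_N(m) = -∑_{a < p^N} (c a mod p^N)^m ⌊c a / p^N⌋` tend
`p`-adically to `(1 - c^{m+1}) B_{m+1} / (m+1)`: expanding `(c a)^{m+1}` with
`c a = p^N ⌊c a / p^N⌋ + (c a mod p^N)` and comparing with Faulhaber's formula
`∑_{a<n} a^{m+1} = B_{m+1} n + O(n²)` shows that the two differ by `O(p^N)`. Restricting to `a`
prime to `p` inserts the Euler factor `1 - p^m`. By the binomial theorem `A(k₁,k₂)` is then the
limit of the sums of `⌊c a / p^N⌋ ⌊c b / p^N⌋ x^{k₁} (x + p y)^{k₂}` over `a` prime to `p` and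
all `b`, where `x`, `y` are the residues of `c a`, `c b`. Both `x` and `x + p y` are prime to `p`,
so by Euler's theorem every term changes by a multiple of `p^{min(l₁,l₂)}` when `(k₁,k₂)` moves
from `(m₁,m₂)` to `(n₁,n₂)`, and the limit keeps this divisibility.
-/

/-- The rational number
`A(k₁,k₂) = Σ_{ν=0}^{k₂} C(k₂,ν)·(1 − p^{k₁+ν})·(1 − c^{k₁+ν+1})·(1 − c^{k₂−ν+1})
  ·(B_{k₁+ν+1}·B_{k₂−ν+1})/((k₁+ν+1)(k₂−ν+1))·p^{k₂−ν}`. -/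
noncomputable def doubleKummerSum (p c k₁ k₂ : ℕ) : ℚ :=
  ∑ ν ∈ Finset.range (k₂ + 1),
    (k₂.choose ν : ℚ) * (1 - (p : ℚ) ^ (k₁ + ν)) * (1 - (c : ℚ) ^ (k₁ + ν + 1)) *
      (1 - (c : ℚ) ^ (k₂ - ν + 1)) *
      (bernoulli (k₁ + ν + 1) * bernoulli (k₂ - ν + 1)) /
        (((k₁ : ℚ) + ν + 1) * ((k₂ : ℚ) - ν + 1)) *
      (p : ℚ) ^ (k₂ - ν)

open Finset Filter Topology
open Polynomial (C X)
open scoped Polynomial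

namespace DoubleKummer

lemma exists_add_pow_succ_eq (r s k : ℕ) :
    ∃ z : ℕ, (r + s) ^ (k + 1) = r ^ (k + 1) + (k + 1) * r ^ k * s + s ^ 2 * z := by
  induction k with
  | zero => exact ⟨0, by ring⟩
  | succ k ih =>
    obtain ⟨z, hz⟩ := ih
    exact ⟨(k + 1) * r ^ k + z * (r + s), by rw [pow_succ, hz]; ring⟩

lemma sum_range_mul_mod {M : Type*} [AddCommMonoid M] {c n : ℕ} (hcn : c.Coprime n)
    (g : ℕ → M) : ∑ a ∈ range n, g (c * a % n) = ∑ a ∈ range n, g a := by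
  have hinj : Set.InjOn (fun a => c * a % n) (range n) := fun a ha b hb hab =>
    (Nat.ModEq.cancel_left_of_coprime (Nat.coprime_comm.mp hcn) hab).eq_of_lt_of_lt
      (mem_range.mp ha) (mem_range.mp hb)
  have himage : (range n).image (fun a => c * a % n) = range n := by
    refine eq_of_subset_of_card_le (fun b hb => ?_) (card_image_of_injOn hinj).ge
    obtain ⟨a, ha, rfl⟩ := mem_image.mp hb
    exact mem_range.mpr (Nat.mod_lt _ (by have := mem_range.mp ha; omega))
  rw [← sum_image (f := g) hinj, himage]

lemma exists_pow_succ_mul_sum_range_pow {c n : ℕ} (hcn : c.Coprime n) (m : ℕ) :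
    ∃ Z : ℕ, c ^ (m + 1) * ∑ a ∈ range n, a ^ (m + 1) =
      ∑ a ∈ range n, a ^ (m + 1) +
        (m + 1) * n * ∑ a ∈ range n, (c * a % n) ^ m * (c * a / n) + n ^ 2 * Z := by
  choose z hz using fun a => exists_add_pow_succ_eq (c * a % n) (n * (c * a / n)) m
  refine ⟨∑ a ∈ range n, (c * a / n) ^ 2 * z a, ?_⟩
  calc c ^ (m + 1) * ∑ a ∈ range n, a ^ (m + 1)
      = ∑ a ∈ range n, (c * a % n + n * (c * a / n)) ^ (m + 1) := by
        simp only [Nat.mod_add_div, mul_sum, mul_pow]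
    _ = ∑ a ∈ range n, (c * a % n) ^ (m + 1) +
          (m + 1) * n * ∑ a ∈ range n, (c * a % n) ^ m * (c * a / n) +
          n ^ 2 * ∑ a ∈ range n, (c * a / n) ^ 2 * z a := by
        simp only [hz, sum_add_distrib, mul_sum]
        refine congrArg₂ (· + ·) (congrArg₂ (· + ·) rfl ?_) ?_ <;>
          exact sum_congr rfl fun a _ => by ring
    _ = _ := by rw [sum_range_mul_mod hcn (· ^ (m + 1))]

noncomputable def faulhaberTail (e : ℕ) : ℚ[X] :=
  ∑ i ∈ range e, C (bernoulli i * (e + 1).choose i / (e + 1)) * X ^ (e - 1 - i)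

lemma sum_range_pow_eq_bernoulli_mul_add (e n : ℕ) :
    ∑ a ∈ range n, (a : ℚ) ^ e = bernoulli e * n + n ^ 2 * (faulhaberTail e).eval (n : ℚ) := by
  have he : (e : ℚ) + 1 ≠ 0 := Nat.cast_add_one_ne_zero e
  rw [sum_range_pow, sum_range_succ, add_comm, faulhaberTail, Polynomial.eval_finsetSum, mul_sum,
    Nat.choose_succ_self_right, Nat.add_sub_cancel_left]
  congr 1
  · push_cast; field_simp
  · refine sum_congr rfl fun i hi => ?_
    rw [show e + 1 - i = 2 + (e - 1 - i) by have := mem_range.mp hi; omega]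
    simp only [Polynomial.eval_mul, Polynomial.eval_C, Polynomial.eval_pow, Polynomial.eval_X]
    ring

lemma exists_norm_eval_natCast_le (p : ℕ) [Fact p.Prime] (P : ℚ[X]) :
    ∃ K : ℝ, ∀ n : ℕ, ‖((P.eval (n : ℚ) : ℚ) : ℚ_[p])‖ ≤ K := by
  refine ⟨∑ i ∈ P.support, ‖((P.coeff i : ℚ) : ℚ_[p])‖, fun n => ?_⟩
  rw [Polynomial.eval_eq_sum, Polynomial.sum_def, Rat.cast_sum]
  refine (norm_sum_le _ _).trans (sum_le_sum fun i _ => ?_)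
  rw [Rat.cast_mul, norm_mul, Rat.cast_pow, norm_pow, Rat.cast_natCast]
  exact mul_le_of_le_one_right (norm_nonneg _)
    (pow_le_one₀ (norm_nonneg _) (by simpa using Padic.norm_int_le_one (p := p) n))

noncomputable def twistedBernoulli (c m : ℕ) : ℚ :=
  (1 - (c : ℚ) ^ (m + 1)) * bernoulli (m + 1) / (m + 1)

def riemannSum (c n m : ℕ) : ℚ :=
  -∑ a ∈ range n, ((c * a % n : ℕ) : ℚ) ^ m * ((c * a / n : ℕ) : ℚ)

lemma exists_mul_riemannSum_sub_twistedBernoulli_eq {c n : ℕ} (hcn : c.Coprime n) (hn : n ≠ 0)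
    (m : ℕ) :
    ∃ Z : ℕ, (m + 1) * (riemannSum c n m - twistedBernoulli c m) =
      n * (Z - ((c : ℚ) ^ (m + 1) - 1) * (faulhaberTail (m + 1)).eval (n : ℚ)) := by
  obtain ⟨Z, hZ⟩ := exists_pow_succ_mul_sum_range_pow hcn m
  refine ⟨Z, mul_left_cancel₀ (Nat.cast_ne_zero.mpr hn : (n : ℚ) ≠ 0) ?_⟩
  have hZ' := congrArg (Nat.cast : ℕ → ℚ) hZ
  push_cast at hZ'
  rw [sum_range_pow_eq_bernoulli_mul_add] at hZ'
  have htB : (m + 1) * twistedBernoulli c m = (1 - (c : ℚ) ^ (m + 1)) * bernoulli (m + 1) := by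
    have : (m : ℚ) + 1 ≠ 0 := Nat.cast_add_one_ne_zero m
    rw [twistedBernoulli]; field_simp
  rw [riemannSum]
  linear_combination hZ' - (n : ℚ) * htB

lemma sum_filter_dvd_range_mul {M : Type*} [AddCommMonoid M] {p : ℕ} (hp : 0 < p) (n : ℕ)
    (f : ℕ → M) : ∑ a ∈ range (p * n) with p ∣ a, f a = ∑ b ∈ range n, f (p * b) := by
  rw [← sum_image fun a _ b _ h => Nat.eq_of_mul_eq_mul_left hp h]
  congr 1
  ext a
  simp only [mem_filter, mem_range, mem_image]
  constructor
  · rintro ⟨ha, b, rfl⟩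
    exact ⟨b, Nat.lt_of_mul_lt_mul_left ha, rfl⟩
  · rintro ⟨b, hb, rfl⟩
    exact ⟨Nat.mul_lt_mul_of_pos_left hb hp, b, rfl⟩

def unitRiemannSum (p c n m : ℕ) : ℚ :=
  -∑ a ∈ range n with ¬ p ∣ a, ((c * a % n : ℕ) : ℚ) ^ m * ((c * a / n : ℕ) : ℚ)

lemma unitRiemannSum_mul {p : ℕ} (hp : 0 < p) (c n m : ℕ) :
    unitRiemannSum p c (p * n) m = riemannSum c (p * n) m - (p : ℚ) ^ m * riemannSum c n m := by
  have hmultiples : ∑ a ∈ range (p * n) with p ∣ a,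
      ((c * a % (p * n) : ℕ) : ℚ) ^ m * ((c * a / (p * n) : ℕ) : ℚ) =
        (p : ℚ) ^ m * ∑ b ∈ range n, ((c * b % n : ℕ) : ℚ) ^ m * ((c * b / n : ℕ) : ℚ) := by
    rw [sum_filter_dvd_range_mul hp, mul_sum]
    refine sum_congr rfl fun b _ => ?_
    rw [mul_left_comm c p b, Nat.mul_mod_mul_left, Nat.mul_div_mul_left _ _ hp]
    push_cast
    ring
  rw [unitRiemannSum, riemannSum, riemannSum,
    ← sum_filter_add_sum_filter_not (range (p * n)) (p ∣ ·), hmultiples]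
  ring

def doubleRiemannSum (p c n k₁ k₂ : ℕ) : ℕ :=
  ∑ a ∈ range n with ¬ p ∣ a, ∑ b ∈ range n,
    c * a / n * (c * b / n) * ((c * a % n) ^ k₁ * (c * a % n + p * (c * b % n)) ^ k₂)

lemma doubleRiemannSum_eq (p c n k₁ k₂ : ℕ) :
    (doubleRiemannSum p c n k₁ k₂ : ℚ) = ∑ ν ∈ range (k₂ + 1), k₂.choose ν * (p : ℚ) ^ (k₂ - ν) *
      (unitRiemannSum p c n (k₁ + ν) * riemannSum c n (k₂ - ν)) := by
  simp only [doubleRiemannSum, unitRiemannSum, riemannSum, neg_mul_neg, sum_mul_sum]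
  simp only [mul_sum]
  push_cast
  symm
  rw [sum_comm]
  refine sum_congr rfl fun a _ => ?_
  rw [sum_comm]
  refine sum_congr rfl fun b _ => ?_
  rw [add_pow, mul_sum, mul_sum]
  exact sum_congr rfl fun ν _ => by ring

lemma doubleKummerSum_eq (p c k₁ k₂ : ℕ) :
    doubleKummerSum p c k₁ k₂ = ∑ ν ∈ range (k₂ + 1), k₂.choose ν * (p : ℚ) ^ (k₂ - ν) *
      ((1 - (p : ℚ) ^ (k₁ + ν)) * twistedBernoulli c (k₁ + ν) * twistedBernoulli c (k₂ - ν)) := by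
  refine sum_congr rfl fun ν hν => ?_
  have hν : ν ≤ k₂ := Nat.lt_succ_iff.mp (mem_range.mp hν)
  have h₁ : (k₁ : ℚ) + ν + 1 ≠ 0 := by positivity
  have h₂ : (k₂ : ℚ) - ν + 1 ≠ 0 := by
    rw [← Nat.cast_sub hν]; positivity
  rw [twistedBernoulli, twistedBernoulli]
  push_cast [Nat.cast_sub hν]
  field_simp

lemma pow_modEq_pow_of_modEq_totient {x k m n : ℕ} (hx : x.Coprime k)
    (h : m ≡ n [MOD k.totient]) : x ^ m ≡ x ^ n [MOD k] := by
  rcases lt_or_ge 1 k with hk | hk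
  · rw [Nat.ModEq, Nat.pow_totient_mod hk hx, h, ← Nat.pow_totient_mod hk hx]
  · interval_cases k
    · rw [(Nat.coprime_zero_right x).mp hx, one_pow, one_pow]
    · exact Nat.modEq_one

lemma pow_modEq_pow_of_modEq_prime_pow {p x l m n : ℕ} (hp : p.Prime) (hx : ¬ p ∣ x)
    (h : m ≡ n [MOD (p - 1) * p ^ (l - 1)]) : x ^ m ≡ x ^ n [MOD p ^ l] := by
  cases l with
  | zero => exact Nat.modEq_one
  | succ l =>
    refine pow_modEq_pow_of_modEq_totient ((hp.coprime_iff_not_dvd.mpr hx).symm.pow_right _) ?_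
    rwa [Nat.totient_prime_pow_succ hp, mul_comm]

lemma doubleRiemannSum_modEq {p c n l m₁ m₂ n₁ n₂ : ℕ} (hp : p.Prime) (hcp : c.Coprime p)
    (hpn : p ∣ n) (h₁ : m₁ ≡ n₁ [MOD (p - 1) * p ^ (l - 1)])
    (h₂ : m₂ ≡ n₂ [MOD (p - 1) * p ^ (l - 1)]) :
    doubleRiemannSum p c n m₁ m₂ ≡ doubleRiemannSum p c n n₁ n₂ [MOD p ^ l] := by
  refine Nat.ModEq.sum fun a ha => Nat.ModEq.sum fun b _ => ?_
  have hx : ¬ p ∣ c * a % n := by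
    rw [Nat.dvd_mod_iff hpn, hp.dvd_mul, not_or]
    exact ⟨(hp.coprime_iff_not_dvd.mp hcp.symm), (mem_filter.mp ha).2⟩
  have hy : ¬ p ∣ c * a % n + p * (c * b % n) := by
    rwa [Nat.dvd_add_left (dvd_mul_right p _)]
  exact ((pow_modEq_pow_of_modEq_prime_pow hp hx h₁).mul
    (pow_modEq_pow_of_modEq_prime_pow hp hy h₂)).mul_left _

section Padic

variable {p : ℕ} [hp : Fact p.Prime]

lemma tendsto_riemannSum {c : ℕ} (hcp : c.Coprime p) (m : ℕ) :
    Tendsto (fun N => (riemannSum c (p ^ N) m : ℚ_[p])) atTop (𝓝 (twistedBernoulli c m)) := by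
  obtain ⟨K, hK⟩ := exists_norm_eval_natCast_le p (faulhaberTail (m + 1))
  have hbound : ∀ N, ‖(((m + 1) * (riemannSum c (p ^ N) m - twistedBernoulli c m) : ℚ) : ℚ_[p])‖
      ≤ (1 + ‖((c ^ (m + 1) - 1 : ℚ) : ℚ_[p])‖ * K) * ‖(p : ℚ_[p])‖ ^ N := by
    intro N
    obtain ⟨Z, hZ⟩ := exists_mul_riemannSum_sub_twistedBernoulli_eq (hcp.pow_right N)
      (pow_ne_zero N hp.out.ne_zero) m
    rw [hZ, Rat.cast_mul, norm_mul, mul_comm, Rat.cast_natCast, Nat.cast_pow (α := ℚ_[p]),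
      norm_pow, Rat.cast_sub, Rat.cast_mul, Rat.cast_natCast]
    gcongr
    refine (norm_sub_le _ _).trans (add_le_add ?_ ?_)
    · simpa using Padic.norm_int_le_one (p := p) Z
    · rw [norm_mul]
      gcongr
      exact hK _
  have hlim : Tendsto (fun N => (((m + 1) * (riemannSum c (p ^ N) m - twistedBernoulli c m) : ℚ)
      : ℚ_[p])) atTop (𝓝 0) :=
    squeeze_zero_norm hbound (by simpa only [mul_zero] using (tendsto_pow_atTop_nhds_zero_of_lt_one
      (norm_nonneg _) (Padic.norm_p_lt_one (p := p))).const_mul _)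
  have hm : ((m : ℚ_[p]) + 1) ≠ 0 := Nat.cast_add_one_ne_zero m
  have h := hlim.const_mul ((m : ℚ_[p]) + 1)⁻¹
  rw [mul_zero] at h
  refine tendsto_sub_nhds_zero_iff.mp (h.congr fun N => ?_)
  push_cast
  field_simp

lemma tendsto_unitRiemannSum {c : ℕ} (hcp : c.Coprime p) (m : ℕ) :
    Tendsto (fun N => (unitRiemannSum p c (p ^ (N + 1)) m : ℚ_[p])) atTop
      (𝓝 ((1 - (p : ℚ_[p]) ^ m) * twistedBernoulli c m)) := by
  have h := tendsto_riemannSum hcp m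
  convert (h.comp (tendsto_add_atTop_nat 1)).sub (h.const_mul ((p : ℚ_[p]) ^ m)) using 1
  · ext N
    simp [pow_succ', unitRiemannSum_mul hp.out.pos]
  · rw [one_sub_mul]

lemma tendsto_doubleRiemannSum {c : ℕ} (hcp : c.Coprime p) (k₁ k₂ : ℕ) :
    Tendsto (fun N => (doubleRiemannSum p c (p ^ (N + 1)) k₁ k₂ : ℚ_[p])) atTop
      (𝓝 (doubleKummerSum p c k₁ k₂)) := by
  simp only [← Rat.cast_natCast (α := ℚ_[p]), doubleRiemannSum_eq, doubleKummerSum_eq]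
  push_cast
  exact tendsto_finsetSum _ fun ν _ => ((tendsto_unitRiemannSum hcp _).mul
    ((tendsto_riemannSum hcp _).comp (tendsto_add_atTop_nat 1))).const_mul _

lemma norm_natCast_sub_le_of_modEq {a b l : ℕ} (h : a ≡ b [MOD p ^ l]) :
    ‖(a : ℚ_[p]) - b‖ ≤ (p : ℝ) ^ (-l : ℤ) := by
  rw [← norm_neg, neg_sub, ← Int.cast_natCast b, ← Int.cast_natCast a, ← Int.cast_sub,
    Padic.norm_int_le_pow_iff_dvd]
  exact_mod_cast h.dvd

lemma exists_eq_pow_mul_of_norm_le {q : ℚ} {l : ℕ} (hq : ‖(q : ℚ_[p])‖ ≤ (p : ℝ) ^ (-l : ℤ)) :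
    ∃ t : ℚ, t.den.Coprime p ∧ q = (p : ℚ) ^ l * t := by
  have hpl : (p : ℚ) ^ l ≠ 0 := pow_ne_zero l (Nat.cast_ne_zero.mpr hp.out.ne_zero)
  refine ⟨q / (p : ℚ) ^ l, ?_, (mul_div_cancel₀ q hpl).symm⟩
  have hle : ‖((q / (p : ℚ) ^ l : ℚ) : ℚ_[p])‖ ≤ 1 := by
    rw [Rat.cast_div, norm_div, Rat.cast_pow, Rat.cast_natCast, Padic.norm_p_pow,
      div_le_one (zpow_pos (Nat.cast_pos.mpr hp.out.pos) _)]
    exact hq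
  rw [Padic.norm_rat_le_one_iff_padicValuation_le_one, Rat.padicValuation_le_one_iff] at hle
  exact (hp.out.coprime_iff_not_dvd.mpr hle).symm

end Padic

end DoubleKummer

open DoubleKummer

theorem double_kummer_congruence_general (p : ℕ) (hp : p.Prime) (c : ℕ)
    (hcp : Nat.Coprime c p) (l₁ l₂ : ℕ)
    (m₁ m₂ n₁ n₂ : ℕ)
    (h₁ : m₁ ≡ n₁ [MOD (p - 1) * p ^ (l₁ - 1)])
    (h₂ : m₂ ≡ n₂ [MOD (p - 1) * p ^ (l₂ - 1)]) :
    ∃ t : ℚ, t.den.Coprime p ∧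
      doubleKummerSum p c m₁ m₂ - doubleKummerSum p c n₁ n₂ = (p : ℚ) ^ (min l₁ l₂) * t := by
  have : Fact p.Prime := ⟨hp⟩
  have weaken {l k k' : ℕ} (hl : min l₁ l₂ ≤ l) (h : k ≡ k' [MOD (p - 1) * p ^ (l - 1)]) :
      k ≡ k' [MOD (p - 1) * p ^ (min l₁ l₂ - 1)] :=
    h.of_dvd (mul_dvd_mul_left _ (pow_dvd_pow _ (by omega)))
  have hcongr (N : ℕ) : doubleRiemannSum p c (p ^ (N + 1)) m₁ m₂ ≡
      doubleRiemannSum p c (p ^ (N + 1)) n₁ n₂ [MOD p ^ min l₁ l₂] :=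
    doubleRiemannSum_modEq hp hcp (dvd_pow_self p N.succ_ne_zero)
      (weaken (min_le_left _ _) h₁) (weaken (min_le_right _ _) h₂)
  refine exists_eq_pow_mul_of_norm_le ?_
  rw [Rat.cast_sub]
  exact le_of_tendsto ((tendsto_doubleRiemannSum hcp m₁ m₂).sub
    (tendsto_doubleRiemannSum hcp n₁ n₂)).norm
    (Eventually.of_forall fun N => norm_natCast_sub_le_of_modEq (hcongr N))

/-- Double Kummer congruence: if `m_j ≡ n_j (mod (p−1)p^{l_j−1})` for `j = 1,2`, then
`A(m₁,m₂) ≡ A(n₁,n₂) (mod p^{min(l₁,l₂)})` as `p`-integral rationals. -/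
theorem double_kummer_congruence (p : ℕ) (hp : p.Prime) (c : ℕ) (hc : 2 ≤ c)
    (hcp : Nat.Coprime c p) (l₁ l₂ : ℕ) (hl₁ : 1 ≤ l₁) (hl₂ : 1 ≤ l₂)
    (m₁ m₂ n₁ n₂ : ℕ)
    (h₁ : m₁ ≡ n₁ [MOD (p - 1) * p ^ (l₁ - 1)])
    (h₂ : m₂ ≡ n₂ [MOD (p - 1) * p ^ (l₂ - 1)]) :
    ∃ t : ℚ, t.den.Coprime p ∧
      doubleKummerSum p c m₁ m₂ - doubleKummerSum p c n₁ n₂ = (p : ℚ) ^ (min l₁ l₂) * t :=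
  double_kummer_congruence_general p hp c hcp l₁ l₂ m₁ m₂ n₁ n₂ h₁ h₂
end

section
/- (Parity vanishing.) Let R be a commutative ℚ-algebra, let r ≥ 1, and let γ_1,…,γ_r, c ∈ R. In the multivariate formal power series ring R[[t_1,…,t_r]] define 𝓗_r := ∏_{j=1}^r ( Σ_{m≥1} (1 − c^{m+1})·(B_{m+1}/(m+1))·γ_j^m·(t_j+⋯+t_r)^m/m! ). Then for all n_1,…,n_r ∈ ℕ₀ with n_1+⋯+n_r ≢ r (mod 2), the coefficient of t_1^{n_1}⋯t_r^{n_r} in 𝓗_r is 0. -/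
/-!
Every factor of `𝓗_r` is odd: its homogeneous part of degree `m` carries `B_{m+1}`, which vanishes
for even `m ≥ 2`, and the degree-`0` part is absent. A product of `r` odd power series only has
monomials of total degree `≡ r (mod 2)`.
-/

/-- The series `Σ_{m≥1} (1 − c^{m+1})·(B_{m+1}/(m+1))·γ^m·(t_j+⋯+t_r)^m/m!`
in `R[[t_1,…,t_r]]` over a commutative `ℚ`-algebra `R`, defined coefficientwise
(the `m`-th summand is homogeneous of degree `m`, so only `m = |d|` contributes
to the coefficient at a monomial `d`). -/
noncomputable def calHFactor (R : Type*) [CommRing R] [Algebra ℚ R] (r : ℕ) (j : Fin r)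
    (γ c : R) : MvPowerSeries (Fin r) R :=
  fun d =>
    (if 1 ≤ (d.sum fun _ e => e) then
        (1 - c ^ ((d.sum fun _ e => e) + 1)) *
          algebraMap ℚ R (bernoulli ((d.sum fun _ e => e) + 1) /
            (((d.sum fun _ e => e) : ℚ) + 1)) *
          γ ^ (d.sum fun _ e => e) *
          algebraMap ℚ R (1 / (Nat.factorial (d.sum fun _ e => e) : ℚ))
      else 0) *
      MvPowerSeries.coeff d
        ((∑ k ∈ Finset.univ.filter fun k => j ≤ k, MvPowerSeries.X k) ^ (d.sum fun _ e => e))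

open Finset

namespace MvPowerSeries

variable {σ ι R : Type*} [CommSemiring R]

theorem coeff_prod_eq_zero_of_odd_degree_add_card [DecidableEq σ] [DecidableEq ι]
    {f : ι → MvPowerSeries σ R} {s : Finset ι}
    (hf : ∀ i ∈ s, ∀ d : σ →₀ ℕ, Even d.degree → coeff d (f i) = 0)
    {d : σ →₀ ℕ} (hd : Odd (d.degree + #s)) :
    coeff d (∏ i ∈ s, f i) = 0 := by
  induction s using Finset.induction_on generalizing d with
  | empty =>
    have hd0 : d ≠ 0 := by rintro rfl; simp at hd
    simp [coeff_one, hd0]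
  | insert a s ha ih =>
    rw [prod_insert ha, coeff_mul]
    refine sum_eq_zero fun pq hpq => ?_
    have hdeg : pq.1.degree + pq.2.degree = d.degree := by
      rw [← map_add, mem_antidiagonal.mp hpq]
    rw [card_insert_of_notMem ha] at hd
    rcases Nat.even_or_odd pq.1.degree with hp | hp
    · rw [hf a (mem_insert_self a s) _ hp, zero_mul]
    · rw [ih (fun i hi => hf i (mem_insert_of_mem hi)) ?_, mul_zero]
      rw [← hdeg] at hd
      rw [Nat.odd_iff] at hp hd ⊢
      omega

end MvPowerSeries

theorem bernoulli_succ_eq_zero_of_even {m : ℕ} (hm : Even m) (hm0 : m ≠ 0) :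
    bernoulli (m + 1) = 0 :=
  bernoulli_eq_zero_of_odd hm.add_one (by omega)

theorem coeff_calHFactor_eq_zero_of_even_degree (R : Type*) [CommRing R] [Algebra ℚ R] {r : ℕ}
    (j : Fin r) (γ c : R) {d : Fin r →₀ ℕ} (hd : Even d.degree) :
    MvPowerSeries.coeff d (calHFactor R r j γ c) = 0 := by
  have hm : Even (d.sum fun _ e => e) := hd
  rw [MvPowerSeries.coeff_apply, calHFactor]
  split_ifs with h1
  · rw [bernoulli_succ_eq_zero_of_even hm (by omega)]
    simp
  · simp

theorem calH_parity_vanishing_general (R : Type*) [CommRing R] [Algebra ℚ R] (r : ℕ)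
    (γ : Fin r → R) (c : R) (n : Fin r → ℕ)
    (hpar : ¬ (∑ j, n j) ≡ r [MOD 2]) :
    MvPowerSeries.coeff (Finsupp.equivFunOnFinite.symm n)
      (∏ j, calHFactor R r j (γ j) c) = 0 := by
  classical
  refine MvPowerSeries.coeff_prod_eq_zero_of_odd_degree_add_card
    (fun j _ d hd => coeff_calHFactor_eq_zero_of_even_degree R j (γ j) c hd) ?_
  rw [Finsupp.degree_eq_sum, Finsupp.coe_equivFunOnFinite_symm, card_univ, Fintype.card_fin,
    Nat.odd_iff]
  unfold Nat.ModEq at hpar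
  omega

/-- Parity vanishing: in
`𝓗_r = ∏_{j=1}^r Σ_{m≥1} (1 − c^{m+1})·(B_{m+1}/(m+1))·γ_j^m·(t_j+⋯+t_r)^m/m!`,
the coefficient of `t_1^{n_1}⋯t_r^{n_r}` vanishes whenever `n_1+⋯+n_r ≢ r (mod 2)`. -/
theorem calH_parity_vanishing (R : Type*) [CommRing R] [Algebra ℚ R] (r : ℕ) (hr : 1 ≤ r)
    (γ : Fin r → R) (c : R) (n : Fin r → ℕ)
    (hpar : ¬ (∑ j, n j) ≡ r [MOD 2]) :
    MvPowerSeries.coeff (Finsupp.equivFunOnFinite.symm n)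
      (∏ j, calHFactor R r j (γ j) c) = 0 :=
  calH_parity_vanishing_general R r γ c n hpar
end

section
/- Let p be a prime and let c, η ∈ ℚ. Let k_1 ∈ ℕ with k_1 ≥ 1 and k_2 ∈ ℕ₀ be such that k_1 + k_2 is odd. Then Σ_{ν=0}^{k_2} C(k_2,ν)·(1 − p^{k_1+ν})·(1 − c^{k_1+ν+1})·(1 − c^{k_2−ν+1})·(B_{k_1+ν+1}·B_{k_2−ν+1})/((k_1+ν+1)(k_2−ν+1))·η^{k_2−ν} = ((c−1)/2)·(1 − c^{k_1+k_2+1})·(1 − p^{k_1+k_2})·B_{k_1+k_2+1}/(k_1+k_2+1). -/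
/-- The depth-two functional relation at non-positive integers: for `k₁ ≥ 1` and
`k₁ + k₂` odd,
`Σ_{ν=0}^{k₂} C(k₂,ν)·(1 − p^{k₁+ν})·(1 − c^{k₁+ν+1})·(1 − c^{k₂−ν+1})
    ·(B_{k₁+ν+1}·B_{k₂−ν+1})/((k₁+ν+1)(k₂−ν+1))·η^{k₂−ν}
  = ((c−1)/2)·(1 − c^{k₁+k₂+1})·(1 − p^{k₁+k₂})·B_{k₁+k₂+1}/(k₁+k₂+1)`. -/
theorem double_L_odd_weight_value (p : ℕ) (hp : p.Prime) (c η : ℚ)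
    (k₁ k₂ : ℕ) (hk₁ : 1 ≤ k₁) (hodd : Odd (k₁ + k₂)) :
    ∑ ν ∈ Finset.range (k₂ + 1),
        (k₂.choose ν : ℚ) * (1 - (p : ℚ) ^ (k₁ + ν)) * (1 - c ^ (k₁ + ν + 1)) *
          (1 - c ^ (k₂ - ν + 1)) *
          (bernoulli (k₁ + ν + 1) * bernoulli (k₂ - ν + 1)) /
            (((k₁ : ℚ) + ν + 1) * (((k₂ - ν : ℕ) : ℚ) + 1)) *
          η ^ (k₂ - ν)
      = ((c - 1) / 2) * (1 - c ^ (k₁ + k₂ + 1)) * (1 - (p : ℚ) ^ (k₁ + k₂)) *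
          bernoulli (k₁ + k₂ + 1) / (((k₁ : ℚ) + k₂) + 1) := by
  rw [Finset.sum_eq_single_of_mem k₂ (Finset.self_mem_range_succ k₂)]
  · simp only [Nat.choose_self, Nat.sub_self, Nat.cast_one, pow_zero, pow_one,
      zero_add, bernoulli_one, Nat.cast_zero]
    ring
  · intro ν hν hne
    have hν' : ν < k₂ :=
      lt_of_le_of_ne (Nat.lt_succ_iff.mp (Finset.mem_range.mp hν)) hne
    rcases Nat.even_or_odd (k₁ + ν + 1) with he | ho
    · have hodd2 : Odd (k₂ - ν + 1) := by
        rw [Nat.odd_iff] at hodd ⊢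
        rw [Nat.even_iff] at he
        omega
      have hz : bernoulli (k₂ - ν + 1) = 0 := by
        rw [bernoulli_eq_bernoulli'_of_ne_one (by omega)]
        exact bernoulli'_eq_zero_of_odd hodd2 (by omega)
      simp [hz]
    · have hz : bernoulli (k₁ + ν + 1) = 0 := by
        rw [bernoulli_eq_bernoulli'_of_ne_one (by omega)]
        exact bernoulli'_eq_zero_of_odd ho (by omega)
      simp [hz]
end

section
/- Let p be a prime, r ≥ 1, n_1,…,n_r ∈ ℕ with n_j ≥ 1, and M ∈ ℕ with M ≥ 1. Let ξ_1,…,ξ_r ∈ ℤ_p with ‖ξ_j‖_p = 1 for all j, and let z₀ ∈ ℚ_p be such that ‖z₀·ξ_i·ξ_{i+1}⋯ξ_r − 1‖_p ≥ 1 for every 1 ≤ i ≤ r. Define g^M(z₀) := Σ_{(l_1,…,l_r)} ( ∏_{j=1}^r ξ_j^{l_1+⋯+l_j} ) · z₀^{l_1+⋯+l_r} · ( ∏_{j=1}^r (l_1+⋯+l_j)^{n_j} )^{-1} · ∏_{i=1}^r (1 − (ξ_i·ξ_{i+1}⋯ξ_r·z₀)^{p^M})^{-1} ∈ ℚ_p,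 where the sum is over all tuples with 0 ≤ l_i < p^M such that p ∤ (l_1 + ⋯ + l_j) for every 1 ≤ j ≤ r (under the stated hypotheses on z₀ all denominators are nonzero). Then ‖g^M(z₀)‖_p ≤ 1, and ‖g^{M+1}(z₀) − g^M(z₀)‖_p ≤ p^{−M}. -/
namespace RigidTMSPLAux

variable {p : ℕ} [hp : Fact p.Prime] {r : ℕ}

/-- Partial sums `l_1 + ⋯ + l_j`. -/
def Sp (l : Fin r → ℕ) (j : Fin r) : ℕ := ∑ i ∈ Finset.univ.filter fun i => i ≤ j, l i

/-- `X_i = ξ_i ξ_{i+1} ⋯ ξ_r · z`. -/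
noncomputable def Xv (ξ : Fin r → ℤ_[p]) (z : ℚ_[p]) (i : Fin r) : ℚ_[p] :=
  (∏ k ∈ Finset.univ.filter fun k => i ≤ k, (ξ k : ℚ_[p])) * z

/-- `C(l) = ∏_j (l_1+⋯+l_j)^{n_j}`. -/
noncomputable def Cv (n : Fin r → ℕ) (l : Fin r → ℕ) : ℚ_[p] :=
  ∏ j, ((Sp l j : ℕ) : ℚ_[p]) ^ n j

/-- `A(Q) = ∏_i (1 - X_i^Q)⁻¹`. -/
noncomputable def Av (ξ : Fin r → ℤ_[p]) (z : ℚ_[p]) (Q : ℕ) : ℚ_[p] :=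
  ∏ i, (1 - Xv ξ z i ^ Q)⁻¹

/-- The summand of the approximant. -/
noncomputable def term (n : Fin r → ℕ) (ξ : Fin r → ℤ_[p]) (z : ℚ_[p]) (Q : ℕ)
    (l : Fin r → ℕ) : ℚ_[p] :=
  (∏ i, Xv ξ z i ^ l i) * (Cv n l)⁻¹ * Av ξ z Q

lemma Sp_add_mul (l m : Fin r → ℕ) (q : ℕ) (j : Fin r) :
    Sp (fun i => l i + q * m i) j = Sp l j + q * Sp m j := by
  simp [Sp, Finset.sum_add_distrib, Finset.mul_sum]

lemma prodX (ξ : Fin r → ℤ_[p]) (z : ℚ_[p]) (l : Fin r → ℕ) :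
    (∏ j, (ξ j : ℚ_[p]) ^ Sp l j) * z ^ (∑ i, l i) = ∏ i, Xv ξ z i ^ l i := by
  rw [eq_comm]
  simp only [Xv, mul_pow, Finset.prod_mul_distrib, ← Finset.prod_pow,
    Finset.prod_pow_eq_pow_sum]
  congr 1
  rw [Finset.prod_comm' (t' := Finset.univ)
    (s' := fun k => Finset.univ.filter fun i => i ≤ k) (by simp)]
  exact Finset.prod_congr rfl fun k _ => Finset.prod_pow_eq_pow_sum _ _ _

lemma fermat {x : ℚ_[p]} (hx : ‖x‖ ≤ 1) (h1 : 1 ≤ ‖x - 1‖) (N : ℕ) :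
    ‖x ^ p ^ N - 1‖ = 1 := by
  set a : ℤ_[p] := ⟨x, hx⟩ with ha
  have hax : (a : ℚ_[p]) = x := rfl
  have key : ∀ b : ℤ_[p], ‖b‖ < 1 ↔ PadicInt.toZMod b = 0 := fun b => by
    rw [PadicInt.norm_lt_one_iff_dvd, ← Ideal.mem_span_singleton,
      ← PadicInt.maximalIdeal_eq_span_p, ← PadicInt.ker_toZMod, RingHom.mem_ker]
  have h1' : PadicInt.toZMod (a - 1) ≠ 0 := by
    rw [Ne, ← key]
    intro hlt
    rw [PadicInt.norm_def] at hlt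
    push_cast [hax] at hlt
    linarith
  have hrw : x ^ p ^ N - 1 = ((a ^ p ^ N - 1 : ℤ_[p]) : ℚ_[p]) := by push_cast [hax]; ring
  rw [hrw, PadicInt.padic_norm_e_of_padicInt]
  refine le_antisymm (PadicInt.norm_le_one _) ?_
  by_contra hlt
  push_neg at hlt
  rw [key] at hlt
  apply h1'
  rw [map_sub, map_one]
  rw [map_sub, map_pow, map_one, ZMod.pow_card_pow] at hlt
  exact hlt

lemma norm_X (ξ : Fin r → ℤ_[p]) (hξ : ∀ j, ‖ξ j‖ = 1) (z : ℚ_[p]) (i : Fin r) :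
    ‖Xv ξ z i‖ = ‖z‖ := by
  rw [Xv, norm_mul, norm_prod]
  have : ∀ k ∈ Finset.univ.filter fun k => i ≤ k, ‖(ξ k : ℚ_[p])‖ = 1 := fun k _ => by
    rw [PadicInt.padic_norm_e_of_padicInt]; exact hξ k
  rw [Finset.prod_congr rfl this, Finset.prod_const_one, one_mul]

lemma norm_one_sub_X_pow (ξ : Fin r → ℤ_[p]) (hξ : ∀ j, ‖ξ j‖ = 1) (z : ℚ_[p])
    (hz : ∀ i : Fin r,
      (1 : ℝ) ≤ ‖z * (∏ k ∈ Finset.univ.filter fun k => i ≤ k, (ξ k : ℚ_[p])) - 1‖)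
    (i : Fin r) (N : ℕ) :
    ‖1 - Xv ξ z i ^ p ^ N‖ = max 1 (‖z‖ ^ p ^ N) := by
  have hXn : ‖Xv ξ z i‖ = ‖z‖ := norm_X ξ hξ z i
  have hz' : (1 : ℝ) ≤ ‖Xv ξ z i - 1‖ := by rw [Xv, mul_comm]; exact hz i
  rcases le_or_gt ‖z‖ 1 with h | h
  · rw [max_eq_left (pow_le_one₀ (norm_nonneg _) h)]
    rw [norm_sub_rev]
    exact fermat (hXn ▸ h) hz' N
  · have hne : ‖(1 : ℚ_[p])‖ ≠ ‖-(Xv ξ z i ^ p ^ N)‖ := by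
      rw [norm_one, norm_neg, norm_pow, hXn]
      exact (one_lt_pow₀ h (pow_ne_zero _ hp.out.pos.ne')).ne
    rw [sub_eq_add_neg, IsUltrametricDist.norm_add_eq_max_of_norm_ne_norm hne,
      norm_one, norm_neg, norm_pow, hXn, max_eq_right (one_le_pow₀ h.le)]

lemma one_sub_X_pow_ne_zero (ξ : Fin r → ℤ_[p]) (hξ : ∀ j, ‖ξ j‖ = 1) (z : ℚ_[p])
    (hz : ∀ i : Fin r,
      (1 : ℝ) ≤ ‖z * (∏ k ∈ Finset.univ.filter fun k => i ≤ k, (ξ k : ℚ_[p])) - 1‖)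
    (i : Fin r) (N : ℕ) : (1 - Xv ξ z i ^ p ^ N) ≠ 0 := by
  intro h0
  have := norm_one_sub_X_pow ξ hξ z hz i N
  rw [h0, norm_zero] at this
  have : (1 : ℝ) ≤ 0 := le_of_le_of_eq (le_max_left _ _) this.symm
  linarith

lemma norm_Cv (n : Fin r → ℕ) (l : Fin r → ℕ) (hl : ∀ j, ¬ (p ∣ Sp l j)) :
    ‖(Cv n l : ℚ_[p])‖ = 1 := by
  rw [Cv, norm_prod]
  rw [Finset.prod_congr rfl (fun j _ => ?_), Finset.prod_const_one]
  rw [norm_pow]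
  have h1 : ‖((Sp l j : ℕ) : ℚ_[p])‖ = 1 := by
    refine le_antisymm ?_ ?_
    · have := Padic.norm_int_le_one (p := p) (Sp l j : ℤ)
      push_cast at this ⊢
      exact this
    · by_contra hlt
      push_neg at hlt
      have : ‖((Sp l j : ℤ) : ℚ_[p])‖ < 1 := by push_cast; exact hlt
      rw [Padic.norm_intCast_lt_one_iff] at this
      exact hl j (Int.ofNat_dvd.mp this)
  rw [h1, one_pow]

lemma Cv_ne_zero (n : Fin r → ℕ) (l : Fin r → ℕ) (hl : ∀ j, ¬ (p ∣ Sp l j)) :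
    (Cv n l : ℚ_[p]) ≠ 0 := by
  intro h
  have := norm_Cv n l hl
  rw [h, norm_zero] at this
  norm_num at this

lemma main_bound (ξ : Fin r → ℤ_[p]) (z : ℚ_[p])
    (hX : ∀ i, ‖Xv ξ z i‖ = ‖z‖)
    (hA : ∀ (i : Fin r) (N : ℕ), ‖1 - Xv ξ z i ^ p ^ N‖ = max 1 (‖z‖ ^ p ^ N))
    (N : ℕ) (l : Fin r → ℕ) (hl : ∀ i, l i < p ^ N) :
    ‖(∏ i, Xv ξ z i ^ l i) * Av ξ z (p ^ N)‖ ≤ 1 := by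
  rw [norm_mul, Av, norm_prod, norm_prod]
  simp only [norm_inv, norm_pow, hA, hX]
  rcases le_or_gt ‖z‖ 1 with h | h
  · have h1 : ∀ i : Fin r, i ∈ Finset.univ → ‖z‖ ^ l i ≤ 1 :=
      fun i _ => pow_le_one₀ (norm_nonneg _) h
    have h2 : ∀ i : Fin r, i ∈ Finset.univ → (max 1 (‖z‖ ^ p ^ N))⁻¹ ≤ 1 := by
      intro i _
      rw [inv_le_one_iff₀]
      right; exact le_max_left _ _
    exact mul_le_one₀ (Finset.prod_le_one (fun i _ => by positivity) h1)
      (Finset.prod_nonneg fun i _ => by positivity)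
      (Finset.prod_le_one (fun i _ => by positivity) h2)
  · rw [max_eq_right (one_le_pow₀ h.le)]
    rw [Finset.prod_pow_eq_pow_sum, Finset.prod_const, Finset.card_univ, Fintype.card_fin,
      ← inv_pow, ← pow_mul, inv_pow, ← div_eq_mul_inv, div_le_one (by positivity)]
    refine pow_le_pow_right₀ h.le ?_
    calc ∑ i, l i ≤ ∑ _i : Fin r, p ^ N := Finset.sum_le_sum fun i _ => (hl i).le
    _ = r * p ^ N := by simp [Finset.sum_const, mul_comm]
    _ = p ^ N * r := mul_comm _ _

lemma geom_aux (y : ℚ_[p]) (h1 : 1 - y ≠ 0) (h2 : 1 - y ^ p ≠ 0) :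
    (∑ m ∈ Finset.range p, y ^ m) * (1 - y ^ p)⁻¹ = (1 - y)⁻¹ := by
  field_simp
  linear_combination (-1 : ℚ_[p]) * geom_sum_mul y p

lemma Cv_sub_norm (n : Fin r → ℕ) (l' m : Fin r → ℕ) (M : ℕ) :
    ‖(Cv n l' : ℚ_[p]) - Cv n (fun i => l' i + p ^ M * m i)‖ ≤ ((p : ℝ) ^ M)⁻¹ := by
  set a : ℕ := ∏ j, (Sp l' j) ^ n j with ha
  set b : ℕ := ∏ j, (Sp (fun i => l' i + p ^ M * m i) j) ^ n j with hb
  have hca : (Cv n l' : ℚ_[p]) = ((a : ℤ) : ℚ_[p]) := by rw [Cv, ha]; push_cast; rfl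
  have hcb : (Cv n (fun i => l' i + p ^ M * m i) : ℚ_[p]) = ((b : ℤ) : ℚ_[p]) := by
    rw [Cv, hb]; push_cast; rfl
  have hmod : (a : ZMod (p ^ M)) = (b : ZMod (p ^ M)) := by
    rw [ha, hb]
    push_cast
    refine Finset.prod_congr rfl fun j _ => ?_
    congr 1
    rw [Sp_add_mul]
    have hzero : ((p : ZMod (p ^ M))) ^ M = 0 := by
      rw [← Nat.cast_pow, ZMod.natCast_self]
    push_cast
    rw [hzero, zero_mul, add_zero]
  have hdvd : ((p : ℤ) ^ M) ∣ ((a : ℤ) - (b : ℤ)) := by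
    have := (ZMod.natCast_eq_natCast_iff _ _ _).mp hmod
    have := (Nat.modEq_iff_dvd).mp this
    push_cast at this ⊢
    exact dvd_sub_comm.mp this
  have := (Padic.norm_int_le_pow_iff_dvd ((a : ℤ) - b) M).mpr hdvd
  rw [hca, hcb, ← Int.cast_sub]
  calc ‖(((a : ℤ) - b : ℤ) : ℚ_[p])‖ ≤ (p : ℝ) ^ (-M : ℤ) := this
  _ = ((p : ℝ) ^ M)⁻¹ := by rw [zpow_neg, zpow_natCast]

end RigidTMSPLAux

open RigidTMSPLAux IsUltrametricDist


/-- The approximant `g^M_{n_1,…,n_r}(ξ_1,…,ξ_r; z)` of the `p`-adic rigid twisted multiple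
star polylogarithm:

`g^M(z) = Σ_{0 ≤ l_i < p^M, p ∤ (l_1+⋯+l_j) ∀j}
  (∏_j ξ_j^{l_1+⋯+l_j})·z^{l_1+⋯+l_r}·(∏_j (l_1+⋯+l_j)^{n_j})⁻¹
    ·∏_i (1 − (ξ_i ξ_{i+1} ⋯ ξ_r·z)^{p^M})⁻¹`. -/
noncomputable def rigidTMSPLApprox (p : ℕ) [Fact p.Prime] (r : ℕ) (n : Fin r → ℕ)
    (ξ : Fin r → ℤ_[p]) (z : ℚ_[p]) (M : ℕ) : ℚ_[p] :=
  ∑ l ∈ (Fintype.piFinset fun _ : Fin r => Finset.range (p ^ M)).filter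
      (fun l => ∀ j : Fin r, ¬ (p ∣ ∑ i ∈ Finset.univ.filter fun i => i ≤ j, l i)),
    (∏ j : Fin r, ((ξ j : ℚ_[p]) ^ (∑ i ∈ Finset.univ.filter fun i => i ≤ j, l i))) *
      z ^ (∑ i, l i) *
      (∏ j : Fin r,
          (((∑ i ∈ Finset.univ.filter fun i => i ≤ j, l i : ℕ) : ℚ_[p]) ^ (n j)))⁻¹ *
      ∏ i : Fin r,
        (1 - ((∏ k ∈ Finset.univ.filter fun k => i ≤ k, (ξ k : ℚ_[p])) * z) ^ (p ^ M))⁻¹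

/-- Norm bounds for the approximants of the `p`-adic rigid twisted multiple star
polylogarithm: `‖g^M(z₀)‖ ≤ 1` and `‖g^{M+1}(z₀) − g^M(z₀)‖ ≤ p^{−M}`. -/
theorem rigidTMSPLApprox_norm_bounds (p : ℕ) [Fact p.Prime] (r : ℕ) (hr : 1 ≤ r)
    (n : Fin r → ℕ) (hn : ∀ j, 1 ≤ n j) (M : ℕ) (hM : 1 ≤ M)
    (ξ : Fin r → ℤ_[p]) (hξ : ∀ j, ‖ξ j‖ = 1) (z₀ : ℚ_[p])
    (hz : ∀ i : Fin r,
      (1 : ℝ) ≤ ‖z₀ * (∏ k ∈ Finset.univ.filter fun k => i ≤ k, (ξ k : ℚ_[p])) - 1‖) :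
    ‖rigidTMSPLApprox p r n ξ z₀ M‖ ≤ 1 ∧
      ‖rigidTMSPLApprox p r n ξ z₀ (M + 1) - rigidTMSPLApprox p r n ξ z₀ M‖
        ≤ ((p : ℝ) ^ M)⁻¹ := by
  classical
  have hppos : 0 < p := (Fact.out : p.Prime).pos
  -- the index set
  set Fs : ℕ → Finset (Fin r → ℕ) := fun N =>
    (Fintype.piFinset fun _ : Fin r => Finset.range (p ^ N)).filter
      (fun l => ∀ j : Fin r, ¬ (p ∣ ∑ i ∈ Finset.univ.filter fun i => i ≤ j, l i)) with hFs
  have happrox : ∀ N, rigidTMSPLApprox p r n ξ z₀ N = ∑ l ∈ Fs N, term n ξ z₀ (p ^ N) l := by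
    intro N
    rw [rigidTMSPLApprox, hFs]
    refine Finset.sum_congr rfl fun l hl => ?_
    simp only [term, Cv, Av]
    rw [← prodX]
    rfl
  have hX : ∀ i, ‖Xv ξ z₀ i‖ = ‖z₀‖ := norm_X ξ hξ z₀
  have hA : ∀ (i : Fin r) (N : ℕ), ‖1 - Xv ξ z₀ i ^ p ^ N‖ = max 1 (‖z₀‖ ^ p ^ N) :=
    fun i N => norm_one_sub_X_pow ξ hξ z₀ hz i N
  have hmem : ∀ {N : ℕ} {l : Fin r → ℕ}, l ∈ Fs N →
      (∀ i, l i < p ^ N) ∧ (∀ j, ¬ (p ∣ Sp l j)) := by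
    intro N l hl
    rw [hFs, Finset.mem_filter, Fintype.mem_piFinset] at hl
    exact ⟨fun i => Finset.mem_range.mp (hl.1 i), fun j => hl.2 j⟩
  have hterm_le : ∀ (N : ℕ), ∀ l ∈ Fs N, ‖term n ξ z₀ (p ^ N) l‖ ≤ 1 := by
    intro N l hl
    obtain ⟨h1, h2⟩ := hmem hl
    have hCn : ‖(Cv n l : ℚ_[p])⁻¹‖ = 1 := by rw [norm_inv, norm_Cv n l h2, inv_one]
    have hre : term n ξ z₀ (p ^ N) l =
        ((∏ i, Xv ξ z₀ i ^ l i) * Av ξ z₀ (p ^ N)) * (Cv n l)⁻¹ := by rw [term]; ring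
    rw [hre, norm_mul, hCn, mul_one]
    exact main_bound ξ z₀ hX hA N l h1
  constructor
  · rw [happrox M]
    exact norm_sum_le_of_forall_le_of_nonneg zero_le_one (hterm_le M)
  -- part 2
  set q := p ^ M with hq
  have hqpos : 0 < q := pow_pos hppos M
  have hpq : p ∣ q := dvd_pow_self p (by omega)
  have hdvd_iff : ∀ (l' m : Fin r → ℕ) (j : Fin r),
      p ∣ Sp (fun i => l' i + q * m i) j ↔ p ∣ Sp l' j := by
    intro l' m j
    rw [Sp_add_mul]
    exact Nat.dvd_add_left (hpq.mul_right _)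
  have hhi : ∀ (l' m : Fin r → ℕ), (∀ i, l' i < q) → (∀ i, m i < p) →
      ∀ i, l' i + q * m i < p ^ (M + 1) := by
    intro l' m h1 h2 i
    have : q * m i + q ≤ q * p := by
      have : m i + 1 ≤ p := h2 i
      calc q * m i + q = q * (m i + 1) := by ring
      _ ≤ q * p := Nat.mul_le_mul_left q this
    have := h1 i
    rw [pow_succ, ← hq]
    omega
  have key : rigidTMSPLApprox p r n ξ z₀ (M + 1)
      = ∑ l' ∈ Fs M, ∑ m ∈ Fintype.piFinset (fun _ : Fin r => Finset.range p),
          term n ξ z₀ (p ^ (M + 1)) (fun i => l' i + q * m i) := by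
    rw [happrox (M + 1), ← Finset.sum_product']
    refine Finset.sum_nbij' (fun l => (fun i => l i % q, fun i => l i / q))
      (fun lm => fun i => lm.1 i + q * lm.2 i) ?_ ?_ ?_ ?_ ?_
    · intro l hl
      obtain ⟨h1, h2⟩ := hmem hl
      have hsplit : (fun i => l i % q + q * (l i / q)) = l :=
        funext fun i => Nat.mod_add_div (l i) q
      rw [Finset.mem_product]
      constructor
      · rw [hFs, Finset.mem_filter, Fintype.mem_piFinset]
        refine ⟨fun i => Finset.mem_range.mpr (Nat.mod_lt _ hqpos), fun j hd => ?_⟩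
        refine h2 j ?_
        rw [← hsplit]
        exact (hdvd_iff _ _ j).mpr hd
      · rw [Fintype.mem_piFinset]
        intro i
        rw [Finset.mem_range, Nat.div_lt_iff_lt_mul hqpos, mul_comm]
        rw [pow_succ] at h1
        exact h1 i
    · intro lm hlm
      rw [Finset.mem_product] at hlm
      obtain ⟨h1, h2⟩ := hmem hlm.1
      rw [Fintype.mem_piFinset] at hlm
      have hmp : ∀ i, lm.2 i < p := fun i => Finset.mem_range.mp (hlm.2 i)
      rw [hFs, Finset.mem_filter, Fintype.mem_piFinset]
      constructor
      · exact fun i => Finset.mem_range.mpr (hhi lm.1 lm.2 h1 hmp i)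
      · intro j hd
        exact h2 j ((hdvd_iff _ _ j).mp hd)
    · intro l _
      exact funext fun i => Nat.mod_add_div (l i) q
    · intro lm hlm
      rw [Finset.mem_product] at hlm
      obtain ⟨h1, _⟩ := hmem hlm.1
      rw [Fintype.mem_piFinset] at hlm
      have hmp : ∀ i, lm.2 i < p := fun i => Finset.mem_range.mp (hlm.2 i)
      have e1 : (fun i => (lm.1 i + q * lm.2 i) % q) = lm.1 := by
        funext i
        rw [Nat.add_mul_mod_self_left, Nat.mod_eq_of_lt (h1 i)]
      have e2 : (fun i => (lm.1 i + q * lm.2 i) / q) = lm.2 := by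
        funext i
        rw [Nat.add_mul_div_left _ _ hqpos, Nat.div_eq_of_lt (h1 i), zero_add]
      exact Prod.ext e1 e2
    · intro l _
      congr 1
      exact (funext fun i => Nat.mod_add_div (l i) q).symm
  rw [key, happrox M, ← Finset.sum_sub_distrib]
  refine norm_sum_le_of_forall_le_of_nonneg (by positivity) fun l' hl' => ?_
  obtain ⟨hl'1, hl'2⟩ := hmem hl'
  have hfilt2 : ∀ (m : Fin r → ℕ) (j : Fin r), ¬ p ∣ Sp (fun i => l' i + q * m i) j :=
    fun m j h => hl'2 j ((hdvd_iff l' m j).mp h)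
  have hsplitterm : ∀ m : Fin r → ℕ, term n ξ z₀ (p ^ (M + 1)) (fun i => l' i + q * m i)
      = (∏ i, (Xv ξ z₀ i ^ q) ^ m i) *
          ((∏ i, Xv ξ z₀ i ^ l' i) * (Cv n l')⁻¹ * Av ξ z₀ (p ^ (M + 1)))
        + ((∏ i, Xv ξ z₀ i ^ (l' i + q * m i)) * Av ξ z₀ (p ^ (M + 1))) *
            ((Cv n (fun i => l' i + q * m i))⁻¹ - (Cv n l')⁻¹) := by
    intro m
    rw [term]
    have hXsplit : ∏ i, Xv ξ z₀ i ^ (l' i + q * m i)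
        = (∏ i, Xv ξ z₀ i ^ l' i) * ∏ i, (Xv ξ z₀ i ^ q) ^ m i := by
      rw [← Finset.prod_mul_distrib]
      exact Finset.prod_congr rfl fun i _ => by rw [pow_add, pow_mul]
    rw [hXsplit]
    ring
  have hmain : (∑ m ∈ Fintype.piFinset (fun _ : Fin r => Finset.range p),
        ∏ i, (Xv ξ z₀ i ^ q) ^ m i) *
      ((∏ i, Xv ξ z₀ i ^ l' i) * (Cv n l')⁻¹ * Av ξ z₀ (p ^ (M + 1)))
      = term n ξ z₀ q l' := by
    rw [← Finset.prod_univ_sum]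
    have hAv : (∏ i, ∑ m ∈ Finset.range p, (Xv ξ z₀ i ^ q) ^ m) * Av ξ z₀ (p ^ (M + 1))
        = Av ξ z₀ q := by
      rw [Av, Av, ← Finset.prod_mul_distrib]
      refine Finset.prod_congr rfl fun i _ => ?_
      have h1 : (1 - Xv ξ z₀ i ^ q) ≠ 0 := one_sub_X_pow_ne_zero ξ hξ z₀ hz i M
      have h2 : (1 - Xv ξ z₀ i ^ p ^ (M + 1)) ≠ 0 := one_sub_X_pow_ne_zero ξ hξ z₀ hz i (M + 1)
      have hpe : Xv ξ z₀ i ^ p ^ (M + 1) = (Xv ξ z₀ i ^ q) ^ p := by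
        rw [← pow_mul, hq, ← pow_succ]
      rw [hpe]
      exact geom_aux _ h1 (by rw [← hpe]; exact h2)
    rw [term, ← hAv]
    ring
  have hsum : (∑ m ∈ Fintype.piFinset (fun _ : Fin r => Finset.range p),
        term n ξ z₀ (p ^ (M + 1)) (fun i => l' i + q * m i))
      = term n ξ z₀ q l'
        + ∑ m ∈ Fintype.piFinset (fun _ : Fin r => Finset.range p),
            ((∏ i, Xv ξ z₀ i ^ (l' i + q * m i)) * Av ξ z₀ (p ^ (M + 1))) *
              ((Cv n (fun i => l' i + q * m i))⁻¹ - (Cv n l')⁻¹) := by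
    rw [Finset.sum_congr rfl (fun m _ => hsplitterm m), Finset.sum_add_distrib,
      ← Finset.sum_mul, hmain]
  rw [hsum, add_sub_cancel_left]
  refine norm_sum_le_of_forall_le_of_nonneg (by positivity) fun m hm => ?_
  rw [Fintype.mem_piFinset] at hm
  have hmp : ∀ i, m i < p := fun i => Finset.mem_range.mp (hm i)
  rw [norm_mul]
  have e1 : ‖(∏ i, Xv ξ z₀ i ^ (l' i + q * m i)) * Av ξ z₀ (p ^ (M + 1))‖ ≤ 1 :=
    main_bound ξ z₀ hX hA (M + 1) _ (hhi l' m hl'1 hmp)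
  have e2 : ‖(Cv n (fun i => l' i + q * m i) : ℚ_[p])⁻¹ - (Cv n l')⁻¹‖ ≤ ((p : ℝ) ^ M)⁻¹ := by
    have ha : (Cv n (fun i => l' i + q * m i) : ℚ_[p]) ≠ 0 := Cv_ne_zero n _ (hfilt2 m)
    have hb : (Cv n l' : ℚ_[p]) ≠ 0 := Cv_ne_zero n l' hl'2
    have hre : (Cv n (fun i => l' i + q * m i) : ℚ_[p])⁻¹ - (Cv n l')⁻¹
        = (Cv n l' - Cv n (fun i => l' i + q * m i)) *
            ((Cv n (fun i => l' i + q * m i))⁻¹ * (Cv n l')⁻¹) := by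
      field_simp
    rw [hre, norm_mul, norm_mul, norm_inv, norm_inv, norm_Cv n _ (hfilt2 m),
      norm_Cv n l' hl'2, inv_one, one_mul, mul_one]
    exact Cv_sub_norm n l' m M
  calc ‖(∏ i, Xv ξ z₀ i ^ (l' i + q * m i)) * Av ξ z₀ (p ^ (M + 1))‖ *
      ‖(Cv n (fun i => l' i + q * m i) : ℚ_[p])⁻¹ - (Cv n l')⁻¹‖
      ≤ 1 * ((p : ℝ) ^ M)⁻¹ := mul_le_mul e1 e2 (norm_nonneg _) zero_le_one
  _ = ((p : ℝ) ^ M)⁻¹ := one_mul _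
end
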